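/- arXiv:math/0606375 — 5 statements merged into one kernel-verified Lean document; each statement's English description precedes it below -/
import Mathlib

section
/- Let Δ be a facet complex. A triple of distinct facets (F, G₁, G₂) satisfies the triple condition if and only if there exists a cycle Δ' ⊆ Δ with F, G₁, G₂ ∈ Δ' and G₁ ∼_{Δ'} F ∼_{Δ'} G₂. -/
variable {V : Type*} [DecidableEq V]

/-- A facet complex: no facet contains another. -/
def IsFacetComplex (Δ : Finset (Finset V)) : Prop :=
  ∀ F ∈ Δ, ∀ G ∈ Δ, F ⊆ G → F = G

/-- `F` is a leaf of `Δ`. -/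
def IsLeaf (Δ : Finset (Finset V)) (F : Finset V) : Prop :=
  F ∈ Δ ∧ (Δ = {F} ∨ ∃ G ∈ Δ.erase F, ∀ H ∈ Δ.erase F, H ∩ F ⊆ G ∩ F)

/-- `Δ` is a forest: every nonempty subset has a leaf. -/
def IsForest (Δ : Finset (Finset V)) : Prop :=
  ∀ Γ ⊆ Δ, Γ.Nonempty → ∃ F, IsLeaf Γ F

/-- `Δ` is connected: any two facets are joined by a path of consecutively
intersecting facets. -/
def FCConnected (Δ : Finset (Finset V)) : Prop :=
  ∀ F ∈ Δ, ∀ G ∈ Δ,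
    Relation.ReflTransGen (fun A B => A ∈ Δ ∧ B ∈ Δ ∧ (A ∩ B).Nonempty) F G

/-- A (simplicial) tree is a connected forest. -/
def IsTree (Δ : Finset (Finset V)) : Prop := FCConnected Δ ∧ IsForest Δ

/-- A cycle: a nonempty facet complex with no leaf, every nonempty proper
subset of which has a leaf. -/
def IsCycle (Δ : Finset (Finset V)) : Prop :=
  Δ.Nonempty ∧ (¬ ∃ F, IsLeaf Δ F) ∧ ∀ Γ ⊂ Δ, Γ.Nonempty → ∃ F, IsLeaf Γ F

/-- Strong neighbors in `Δ`. -/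
def StrongNeighbor (Δ : Finset (Finset V)) (F G : Finset V) : Prop :=
  F ∈ Δ ∧ G ∈ Δ ∧ F ≠ G ∧ ∀ H ∈ Δ, F ∩ G ⊆ H → H = F ∨ H = G

/-- `F` and `G` are connected outside the vertex set `S` in `Γ`. -/
def ConnectedOutside (Γ : Finset (Finset V)) (S : Finset V) (F G : Finset V) : Prop :=
  F ∈ Γ ∧ G ∈ Γ ∧
    Relation.ReflTransGen (fun A B => A ∈ Γ ∧ B ∈ Γ ∧ ((A ∩ B) \ S).Nonempty) F G

/-- The complex `⟨Δ⟩_F(G₁,G₂)`. -/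
def residue (Δ : Finset (Finset V)) (F G₁ G₂ : Finset V) : Finset (Finset V) :=
  Δ.filter (fun H => H ∩ F = G₁ ∩ G₂) ∪ {G₁, G₂}

/-- The triple condition for `(F, G₁, G₂)`. -/
def TripleCondition (Δ : Finset (Finset V)) (F G₁ G₂ : Finset V) : Prop :=
  ¬ (G₁ ∩ F ⊆ G₂ ∩ F) ∧ ¬ (G₂ ∩ F ⊆ G₁ ∩ F) ∧
    ConnectedOutside (residue Δ F G₁ G₂) F G₁ G₂


namespace TCAux


open Finset

variable {V : Type*} [DecidableEq V]

/-- Any nonempty complex with at most two facets has a leaf. -/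
lemma leaf_of_card_le_two {Γ : Finset (Finset V)} (hne : Γ.Nonempty)
    (hc : Γ.card ≤ 2) : ∃ L, IsLeaf Γ L := by
  classical
  obtain ⟨A, hA⟩ := hne
  by_cases h : Γ.erase A = ∅
  · refine ⟨A, hA, Or.inl ?_⟩
    apply Finset.eq_singleton_iff_unique_mem.2
    refine ⟨hA, fun x hx => ?_⟩
    by_contra hxa
    exact absurd (Finset.mem_erase.2 ⟨hxa, hx⟩) (by simp [h])
  · obtain ⟨B, hB⟩ := Finset.nonempty_iff_ne_empty.2 h
    refine ⟨A, hA, Or.inr ⟨B, hB, fun H hH => ?_⟩⟩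
    have : Γ.erase A = {B} := by
      apply Finset.eq_singleton_iff_unique_mem.2
      refine ⟨hB, fun x hx => ?_⟩
      by_contra hxb
      have hcard : 2 ≤ (Γ.erase A).card := by
        have := Finset.one_lt_card.2 ⟨x, hx, B, hB, hxb⟩
        omega
      have := Finset.card_erase_of_mem hA
      omega
    rw [this] at hH
    simp only [Finset.mem_singleton] at hH
    subst hH
    exact Finset.Subset.refl _

/-- a leaf via a linear order whose far-apart members intersect inside a common core. -/
lemma order_leaf (T : Finset ℕ) (hT : T.Nonempty) (g : ℕ → Finset V) (I : Finset V)
    (hinj : ∀ s ∈ T, ∀ t ∈ T, g s = g t → s = t)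
    (hI : ∀ t ∈ T, I ⊆ g t)
    (hgap : ∀ s ∈ T, ∀ t ∈ T, s + 2 ≤ t → g s ∩ g t ⊆ I) :
    ∃ L, IsLeaf (T.image g) L := by
  classical
  set t₀ := T.max' hT with ht₀
  have ht₀T : t₀ ∈ T := T.max'_mem hT
  refine ⟨g t₀, Finset.mem_image_of_mem g ht₀T, ?_⟩
  by_cases hsing : T.erase t₀ = ∅
  · left
    have hTs : T = {t₀} := by
      apply Finset.eq_singleton_iff_unique_mem.2
      refine ⟨ht₀T, fun x hx => ?_⟩
      by_contra hxt
      exact absurd (Finset.mem_erase.2 ⟨hxt, hx⟩) (by simp [hsing])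
    rw [hTs]
    simp
  · have hT' : (T.erase t₀).Nonempty := Finset.nonempty_iff_ne_empty.2 hsing
    right
    set t₁ := (T.erase t₀).max' hT' with ht₁
    have ht₁e : t₁ ∈ T.erase t₀ := Finset.max'_mem _ hT'
    have ht₁T : t₁ ∈ T := Finset.mem_of_mem_erase ht₁e
    have ht₁ne : t₁ ≠ t₀ := (Finset.mem_erase.1 ht₁e).1
    have ht₁lt : t₁ < t₀ := lt_of_le_of_ne (Finset.le_max' T t₁ ht₁T) ht₁ne
    refine ⟨g t₁, Finset.mem_erase.2 ⟨fun h => ht₁ne (hinj _ ht₁T _ ht₀T h), Finset.mem_image_of_mem g ht₁T⟩, ?_⟩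
    intro H hH
    obtain ⟨hHne, hHmem⟩ := Finset.mem_erase.1 hH
    obtain ⟨s, hsT, hsg⟩ := Finset.mem_image.1 hHmem
    subst hsg
    have hsne : s ≠ t₀ := fun h => hHne (by rw [h])
    have hse : s ∈ T.erase t₀ := Finset.mem_erase.2 ⟨hsne, hsT⟩
    rcases eq_or_lt_of_le (Finset.le_max' _ s hse) with h | h
    · have : g s = g t₁ := by rw [show s = t₁ from h]
      rw [this]
    · have hgap' : g s ∩ g t₀ ⊆ I := hgap s hsT t₀ ht₀T (by omega)
      intro x hx
      have hxI : x ∈ I := hgap' hx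
      exact Finset.mem_inter.2 ⟨hI t₁ ht₁T hxI, (Finset.mem_inter.1 hx).2⟩


open Finset
variable {V : Type*} [DecidableEq V]

lemma joint_of_leaf {Γ : Finset (Finset V)} {L : Finset V} (h : IsLeaf Γ L)
    (h2 : 2 ≤ Γ.card) : ∃ J ∈ Γ.erase L, ∀ H ∈ Γ.erase L, H ∩ L ⊆ J ∩ L := by
  rcases h.2 with hs | hj
  · rw [hs] at h2; simp at h2
  · exact hj

/-- Every "forest" with at least two facets has two distinct leaves. -/
lemma two_leaves (Γ : Finset (Finset V))
    (hfor : ∀ E ⊆ Γ, E.Nonempty → ∃ L, IsLeaf E L)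
    (h2 : 2 ≤ Γ.card) :
    ∃ L₁ L₂, L₁ ≠ L₂ ∧ IsLeaf Γ L₁ ∧ IsLeaf Γ L₂ := by
  classical
  induction Γ using Finset.strongInduction with
  | _ Γ ih =>
  obtain ⟨L₁, hL₁⟩ := hfor Γ (Finset.Subset.refl _) (Finset.card_pos.1 (by omega))
  obtain ⟨J₁, hJ₁e, hJ₁⟩ := joint_of_leaf hL₁ h2
  set Γ' := Γ.erase L₁ with hΓ'
  have hL₁Γ : L₁ ∈ Γ := hL₁.1
  have hcard' : Γ'.card = Γ.card - 1 := Finset.card_erase_of_mem hL₁Γ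
  by_cases hc1 : Γ'.card = 1
  · -- Γ' = {X}, X is a leaf of Γ
    obtain ⟨X, hX⟩ := Finset.card_eq_one.1 hc1
    have hXe : X ∈ Γ' := by rw [hX]; simp
    have hXΓ : X ∈ Γ := Finset.mem_of_mem_erase hXe
    have hXne : X ≠ L₁ := (Finset.mem_erase.1 hXe).1
    refine ⟨L₁, X, fun h => hXne h.symm, hL₁, hXΓ, Or.inr ⟨L₁, ?_, ?_⟩⟩
    · exact Finset.mem_erase.2 ⟨fun h => hXne h.symm, hL₁Γ⟩
    · intro H hH
      have : H = L₁ := by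
        have hHΓ : H ∈ Γ := Finset.mem_of_mem_erase hH
        have hHX : H ≠ X := (Finset.mem_erase.1 hH).1
        by_contra hne
        have : H ∈ Γ' := Finset.mem_erase.2 ⟨hne, hHΓ⟩
        rw [hX] at this; simp at this; exact hHX this
      rw [this]
  · have hc2' : 2 ≤ Γ'.card := by
      have : 1 ≤ Γ'.card := by
        have : J₁ ∈ Γ' := hJ₁e
        exact Finset.card_pos.2 ⟨J₁, this⟩
      omega
    have hsub : Γ' ⊂ Γ := Finset.erase_ssubset hL₁Γ
    obtain ⟨L₂, L₃, hne23, hl2, hl3⟩ := ih Γ' hsub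
      (fun E hE hEne => hfor E (hE.trans hsub.subset) hEne) hc2'
    -- pick the one ≠ J₁
    have key : ∀ L, IsLeaf Γ' L → L ≠ J₁ → IsLeaf Γ L := by
      intro L hL hLJ
      have hLΓ' : L ∈ Γ' := hL.1
      have hLΓ : L ∈ Γ := Finset.mem_of_mem_erase hLΓ'
      have hLne1 : L ≠ L₁ := (Finset.mem_erase.1 hLΓ').1
      obtain ⟨J, hJe, hJ⟩ := joint_of_leaf hL hc2'
      refine ⟨hLΓ, Or.inr ⟨J, ?_, ?_⟩⟩
      · have := Finset.mem_erase.1 hJe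
        exact Finset.mem_erase.2 ⟨this.1, Finset.mem_of_mem_erase this.2⟩
      · intro H hH
        obtain ⟨hHL, hHΓ⟩ := Finset.mem_erase.1 hH
        by_cases hH1 : H = L₁
        · subst hH1
          have hLe : L ∈ Γ.erase H := Finset.mem_erase.2 ⟨hLne1, hLΓ⟩
          have s1 : L ∩ H ⊆ J₁ ∩ H := hJ₁ L hLe
          have hJ₁L : J₁ ∈ Γ'.erase L := by
            refine Finset.mem_erase.2 ⟨fun h => hLJ h.symm, ?_⟩
            exact Finset.mem_erase.2 (Finset.mem_erase.1 hJ₁e)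
          have s2 : J₁ ∩ L ⊆ J ∩ L := hJ J₁ hJ₁L
          intro x hx
          have hx' := Finset.mem_inter.1 hx
          have : x ∈ J₁ ∩ H := s1 (Finset.mem_inter.2 ⟨hx'.2, hx'.1⟩)
          have hxJ₁ : x ∈ J₁ := (Finset.mem_inter.1 this).1
          have : x ∈ J ∩ L := s2 (Finset.mem_inter.2 ⟨hxJ₁, hx'.2⟩)
          exact this
        · exact hJ H (Finset.mem_erase.2 ⟨hHL, Finset.mem_erase.2 ⟨hH1, hHΓ⟩⟩)
    by_cases h2J : L₂ = J₁
    · have hl3' : IsLeaf Γ L₃ := key L₃ hl3 (by rw [← h2J]; exact fun h => hne23 h.symm)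
      exact ⟨L₁, L₃, fun h => (Finset.mem_erase.1 hl3.1).1 h.symm, hL₁, hl3'⟩
    · have hl2' : IsLeaf Γ L₂ := key L₂ hl2 h2J
      exact ⟨L₁, L₂, fun h => (Finset.mem_erase.1 hl2.1).1 h.symm, hL₁, hl2'⟩


open Finset
variable {V : Type*} [DecidableEq V]

lemma rtg_path {α : Type*} {r : α → α → Prop} {a b : α} (h : Relation.ReflTransGen r a b) :
    ∃ n, ∃ f : ℕ → α, f 0 = a ∧ f n = b ∧ ∀ i < n, r (f i) (f (i+1)) := by
  induction h with
  | refl => exact ⟨0, fun _ => a, rfl, rfl, fun i hi => absurd hi (by omega)⟩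
  | @tail c d _ hcd ih =>
    obtain ⟨n, f, h0, hn, he⟩ := ih
    refine ⟨n+1, fun i => if i ≤ n then f i else d, by simp [h0], by simp, ?_⟩
    intro i hi
    by_cases h1 : i < n
    · simp only [if_pos (by omega : i ≤ n), if_pos (by omega : i + 1 ≤ n)]
      exact he i h1
    · have hin : i = n := by omega
      simp only [hin, if_pos (le_refl n), if_neg (show ¬ n + 1 ≤ n by omega), hn]
      exact hcd

lemma exists_pack (S : Finset (Finset V)) (F a b : Finset V) (hab : a ≠ b)
    (h : Relation.ReflTransGen (fun A B => A ∈ S ∧ B ∈ S ∧ ((A ∩ B) \ F).Nonempty) a b) :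
    ∃ n, ∃ f : ℕ → Finset V, 1 ≤ n ∧ f 0 = a ∧ f n = b ∧ (∀ i ≤ n, f i ∈ S) ∧
      (∀ i < n, ((f i ∩ f (i+1)) \ F).Nonempty) ∧
      (∀ i j, i + 2 ≤ j → j ≤ n → (f i ∩ f j) \ F = ∅) ∧
      (∀ i ≤ n, ∀ j, j ≤ n → f i = f j → i = j) := by
  classical
  set r := fun A B : Finset V => A ∈ S ∧ B ∈ S ∧ ((A ∩ B) \ F).Nonempty with hr
  set P : ℕ → Prop := fun m => ∃ f : ℕ → Finset V, f 0 = a ∧ f m = b ∧ ∀ i < m, r (f i) (f (i+1)) with hPdef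
  have hP : ∃ m, P m := by
    obtain ⟨n, f, h0, hn, he⟩ := rtg_path h
    exact ⟨n, f, h0, hn, he⟩
  obtain ⟨f, h0, hn, he⟩ := Nat.find_spec hP
  set n := Nat.find hP with hndef
  have hmin : ∀ m, m < n → ¬ P m := fun m hm => Nat.find_min hP hm
  have hn1 : 1 ≤ n := by
    by_contra hc
    have hn0 : n = 0 := by omega
    apply hab
    rw [← h0, ← hn, hn0]
  have key : ∀ i j, i + 2 ≤ j → j ≤ n → ¬ r (f i) (f j) := by
    intro i j hij hj hrij
    have hd1 : 1 ≤ j - i - 1 := by omega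
    set d := j - i - 1 with hd
    apply hmin (n - d) (by omega)
    refine ⟨fun k => if k ≤ i then f k else f (k + d), ?_, ?_, ?_⟩
    · simp only [if_pos (by omega : (0:ℕ) ≤ i)]; exact h0
    · simp only [if_neg (by omega : ¬ n - d ≤ i)]
      rw [show n - d + d = n by omega]; exact hn
    · intro k hk
      by_cases h1 : k < i
      · simp only [if_pos (by omega : k ≤ i), if_pos (by omega : k + 1 ≤ i)]
        exact he k (by omega)
      · by_cases h2 : k = i
        · subst h2
          simp only [if_pos (le_refl k), if_neg (by omega : ¬ k + 1 ≤ k)]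
          rw [show k + 1 + d = j by omega]
          exact hrij
        · simp only [if_neg (by omega : ¬ k ≤ i), if_neg (by omega : ¬ k + 1 ≤ i)]
          rw [show k + 1 + d = k + d + 1 by omega]
          exact he (k + d) (by omega)
  have hadj : ∀ i, i + 1 ≤ n → f i ≠ f (i + 1) := by
    intro i hi heq
    apply hmin (n - 1) (by omega)
    refine ⟨fun k => if k ≤ i then f k else f (k + 1), ?_, ?_, ?_⟩
    · simp only [if_pos (by omega : (0:ℕ) ≤ i)]; exact h0
    · by_cases h1 : n - 1 ≤ i
      · have hieq : i = n - 1 := by omega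
        simp only [if_pos h1]
        rw [hieq] at heq
        rw [show n - 1 + 1 = n by omega] at heq
        rw [heq]; exact hn
      · simp only [if_neg h1]
        rw [show n - 1 + 1 = n by omega]; exact hn
    · intro k hk
      by_cases h1 : k < i
      · simp only [if_pos (by omega : k ≤ i), if_pos (by omega : k + 1 ≤ i)]
        exact he k (by omega)
      · by_cases h2 : k = i
        · subst h2
          simp only [if_pos (le_refl k), if_neg (by omega : ¬ k + 1 ≤ k)]
          have := he (k + 1) (by omega)
          rw [← heq] at this
          exact this
        · simp only [if_neg (by omega : ¬ k ≤ i), if_neg (by omega : ¬ k + 1 ≤ i)]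
          exact he (k + 1) (by omega)
  have hmem : ∀ i ≤ n, f i ∈ S := by
    intro i hi
    by_cases h1 : i < n
    · exact (he i h1).1
    · have : i = n := by omega
      subst this
      have := (he (n - 1) (by omega)).2.1
      rwa [show n - 1 + 1 = n by omega] at this
  have hnosc : ∀ i j, i + 2 ≤ j → j ≤ n → (f i ∩ f j) \ F = ∅ := by
    intro i j hij hj
    by_contra hc
    exact key i j hij hj ⟨hmem i (by omega), hmem j hj, Finset.nonempty_iff_ne_empty.2 hc⟩
  have hinj : ∀ i ≤ n, ∀ j, j ≤ n → f i = f j → i = j := by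
    have half : ∀ i j, i < j → j ≤ n → f i = f j → False := by
      intro i j hij hj heq
      by_cases h1 : j = i + 1
      · exact hadj i (by omega) (by rw [heq, h1])
      · obtain ⟨x, hx⟩ := (he i (by omega)).2.2
        have hx' := Finset.mem_sdiff.1 hx
        have hxi : x ∈ f i := (Finset.mem_inter.1 hx'.1).1
        have : x ∈ (f i ∩ f j) \ F := by
          refine Finset.mem_sdiff.2 ⟨Finset.mem_inter.2 ⟨hxi, ?_⟩, hx'.2⟩
          rw [← heq]; exact hxi
        rw [hnosc i j (by omega) hj] at this
        exact absurd this (Finset.notMem_empty x)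
    intro i hi j hj heq
    rcases lt_trichotomy i j with h | h | h
    · exact absurd (half i j h hj heq) id
    · exact h
    · exact absurd (half j i h hi heq.symm) id
  exact ⟨n, f, hn1, h0, hn, hmem, fun i hi => (he i hi).2.2, hnosc, hinj⟩

open Finset
variable {V : Type*} [DecidableEq V]

/-- A minimal path outside `F`. -/
structure Pack (F : Finset V) (n : ℕ) (f : ℕ → Finset V) : Prop where
  hn : 1 ≤ n
  edge : ∀ i < n, ((f i ∩ f (i+1)) \ F).Nonempty
  nosc : ∀ i j, i + 2 ≤ j → j ≤ n → (f i ∩ f j) \ F = ∅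
  inj : ∀ i ≤ n, ∀ j, j ≤ n → f i = f j → i = j
  nF : ∀ i ≤ n, f i ≠ F

variable {F : Finset V} {n : ℕ} {f : ℕ → Finset V}

lemma Pack.rev (P : Pack F n f) : Pack F n (fun i => f (n - i)) := by
  constructor
  · exact P.hn
  · intro i hi
    have := P.edge (n - i - 1) (by omega)
    rw [show n - i - 1 + 1 = n - i by omega] at this
    rw [Finset.inter_comm, show n - (i+1) = n - i - 1 by omega]
    exact this
  · intro i j hij hj
    have := P.nosc (n - j) (n - i) (by omega) (by omega)
    rw [Finset.inter_comm] at this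
    exact this
  · intro i hi j hj heq
    have := P.inj (n - i) (by omega) (n - j) (by omega) heq
    omega
  · intro i hi
    exact P.nF (n - i) (by omega)

/-- Two facets of the path sharing a vertex outside `F` are adjacent. -/
lemma Pack.adjacent (P : Pack F n f) {x : V} {i k : ℕ} (hi : i ≤ n) (hk : k ≤ n)
    (hxi : x ∈ f i) (hxk : x ∈ f k) (hxF : x ∉ F) : i ≤ k + 1 ∧ k ≤ i + 1 := by
  constructor
  · by_contra h
    have := P.nosc k i (by omega) hi
    have hx : x ∈ (f k ∩ f i) \ F := Finset.mem_sdiff.2 ⟨Finset.mem_inter.2 ⟨hxk, hxi⟩, hxF⟩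
    rw [this] at hx
    exact absurd hx (Finset.notMem_empty x)
  · by_contra h
    have := P.nosc i k (by omega) hk
    have hx : x ∈ (f i ∩ f k) \ F := Finset.mem_sdiff.2 ⟨Finset.mem_inter.2 ⟨hxi, hxk⟩, hxF⟩
    rw [this] at hx
    exact absurd hx (Finset.notMem_empty x)

/-- If `f j` is a leaf of `Γ ⊆ {F} ∪ path` and `f (j+1) ∈ Γ`, any joint for it is `f (j+1)`. -/
lemma Pack.joint_succ (P : Pack F n f) {Γ : Finset (Finset V)}
    (hΓ : Γ ⊆ insert F ((Finset.range (n+1)).image f)) {j : ℕ} (hj : j < n)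
    (hpj1 : f (j+1) ∈ Γ) {J : Finset V} (hJ : J ∈ Γ.erase (f j))
    (hdom : ∀ H ∈ Γ.erase (f j), H ∩ f j ⊆ J ∩ f j) : J = f (j+1) := by
  obtain ⟨y, hy⟩ := P.edge j hj
  have hy' := Finset.mem_sdiff.1 hy
  have hyj : y ∈ f j := (Finset.mem_inter.1 hy'.1).1
  have hyj1 : y ∈ f (j+1) := (Finset.mem_inter.1 hy'.1).2
  have hne : f (j+1) ≠ f j := fun h => by
    have := P.inj (j+1) (by omega) j (by omega) h; omega
  have hyJ : y ∈ J := by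
    have := hdom (f (j+1)) (Finset.mem_erase.2 ⟨hne, hpj1⟩)
    exact (Finset.mem_inter.1 (this (Finset.mem_inter.2 ⟨hyj1, hyj⟩))).1
  have hJΓ : J ∈ Γ := Finset.mem_of_mem_erase hJ
  rcases Finset.mem_insert.1 (hΓ hJΓ) with hJF | hJim
  · exact absurd (hJF ▸ hyJ) hy'.2
  · obtain ⟨k, hk, hkJ⟩ := Finset.mem_image.1 hJim
    have hkn : k ≤ n := by have := Finset.mem_range.1 hk; omega
    subst hkJ
    have a1 := P.adjacent (by omega : j ≤ n) hkn hyj hyJ hy'.2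
    have a2 := P.adjacent (by omega : j + 1 ≤ n) hkn hyj1 hyJ hy'.2
    have hknej : k ≠ j := fun h => (Finset.mem_erase.1 hJ).1 (by rw [h])
    have : k = j + 1 := by omega
    rw [this]

/-- Mirror image of `joint_succ`. -/
lemma Pack.joint_pred (P : Pack F n f) {Γ : Finset (Finset V)}
    (hΓ : Γ ⊆ insert F ((Finset.range (n+1)).image f)) {j : ℕ} (hj0 : 0 < j) (hj : j ≤ n)
    (hpj1 : f (j-1) ∈ Γ) {J : Finset V} (hJ : J ∈ Γ.erase (f j))
    (hdom : ∀ H ∈ Γ.erase (f j), H ∩ f j ⊆ J ∩ f j) : J = f (j-1) := by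
  obtain ⟨y, hy⟩ := P.edge (j-1) (by omega)
  rw [show j - 1 + 1 = j by omega] at hy
  have hy' := Finset.mem_sdiff.1 hy
  have hyj1 : y ∈ f (j-1) := (Finset.mem_inter.1 hy'.1).1
  have hyj : y ∈ f j := (Finset.mem_inter.1 hy'.1).2
  have hne : f (j-1) ≠ f j := fun h => by
    have := P.inj (j-1) (by omega) j (by omega) h; omega
  have hyJ : y ∈ J := by
    have := hdom (f (j-1)) (Finset.mem_erase.2 ⟨hne, hpj1⟩)
    exact (Finset.mem_inter.1 (this (Finset.mem_inter.2 ⟨hyj1, hyj⟩))).1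
  have hJΓ : J ∈ Γ := Finset.mem_of_mem_erase hJ
  rcases Finset.mem_insert.1 (hΓ hJΓ) with hJF | hJim
  · exact absurd (hJF ▸ hyJ) hy'.2
  · obtain ⟨k, hk, hkJ⟩ := Finset.mem_image.1 hJim
    have hkn : k ≤ n := by have := Finset.mem_range.1 hk; omega
    subst hkJ
    have a1 := P.adjacent hj hkn hyj hyJ hy'.2
    have a2 := P.adjacent (by omega : j - 1 ≤ n) hkn hyj1 hyJ hy'.2
    have hknej : k ≠ j := fun h => (Finset.mem_erase.1 hJ).1 (by rw [h])
    have : k = j - 1 := by omega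
    rw [this]

/-- An interior facet of the path is never a leaf of a subcomplex containing its neighbours. -/
lemma Pack.not_leaf_interior (P : Pack F n f) {Γ : Finset (Finset V)}
    (hΓ : Γ ⊆ insert F ((Finset.range (n+1)).image f)) {i : ℕ} (hi0 : 0 < i) (hin : i < n)
    (hm : f (i-1) ∈ Γ) (hp : f (i+1) ∈ Γ) : ¬ IsLeaf Γ (f i) := by
  rintro ⟨hmem, hrest⟩
  have hne : f (i-1) ≠ f i := fun h => by
    have := P.inj (i-1) (by omega) i (by omega) h; omega
  rcases hrest with hs | ⟨J, hJ, hdom⟩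
  · rw [hs] at hm
    exact hne (Finset.mem_singleton.1 hm)
  · have e1 : J = f (i+1) := P.joint_succ hΓ (by omega) hp hJ hdom
    have e2 : J = f (i-1) := P.joint_pred hΓ (by omega) (by omega) hm hJ hdom
    have := P.inj (i+1) (by omega) (i-1) (by omega) (e1 ▸ e2)
    omega



variable {F : Finset V} {n : ℕ} {f : ℕ → Finset V}

lemma rev_image : (Finset.range (n+1)).image (fun i => f (n - i)) = (Finset.range (n+1)).image f := by
  ext A
  simp only [Finset.mem_image, Finset.mem_range]
  constructor
  · rintro ⟨k, hk, he⟩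
    exact ⟨n - k, by omega, he⟩
  · rintro ⟨k, hk, he⟩
    refine ⟨n - k, by omega, ?_⟩
    rw [show n - (n - k) = k by omega]
    exact he

lemma cycle_outside_connected {D : Finset (Finset V)} (hcyc : IsCycle D) {F G₁ : Finset V}
    (hFD : F ∈ D) (hG₁ : G₁ ∈ D.erase F) :
    ∀ H ∈ D.erase F, Relation.ReflTransGen
      (fun A B => A ∈ D.erase F ∧ B ∈ D.erase F ∧ ((A ∩ B) \ F).Nonempty) G₁ H := by
  classical
  obtain ⟨hDne, hnoleaf, hmin⟩ := hcyc
  set S := D.erase F with hS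
  set r := fun A B : Finset V => A ∈ S ∧ B ∈ S ∧ ((A ∩ B) \ F).Nonempty with hr
  set C := S.filter (fun H => Relation.ReflTransGen r G₁ H) with hCdef
  have hG₁C : G₁ ∈ C := Finset.mem_filter.2 ⟨hG₁, Relation.ReflTransGen.refl⟩
  set Γ₁ := insert F C with hΓ₁
  have hΓ₁D : Γ₁ ⊆ D := by
    intro A hA
    rcases Finset.mem_insert.1 hA with h | h
    · exact h ▸ hFD
    · exact Finset.mem_of_mem_erase (Finset.mem_filter.1 h).1
  by_cases heq : Γ₁ = D
  · intro H hH
    have hHΓ : H ∈ Γ₁ := by rw [heq]; exact Finset.mem_of_mem_erase hH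
    rcases Finset.mem_insert.1 hHΓ with h | h
    · exact absurd h (Finset.mem_erase.1 hH).1
    · exact (Finset.mem_filter.1 h).2
  · exfalso
    have hss : Γ₁ ⊂ D := lt_of_le_of_ne hΓ₁D heq
    have hforest : ∀ E ⊆ Γ₁, E.Nonempty → ∃ L, IsLeaf E L := fun E hE hEne =>
      hmin E (lt_of_le_of_lt hE hss) hEne
    have hFC : F ∉ C := fun h => (Finset.mem_erase.1 (Finset.mem_filter.1 h).1).1 rfl
    have hcard : 2 ≤ Γ₁.card := Finset.one_lt_card.2
      ⟨F, Finset.mem_insert_self _ _, G₁, Finset.mem_insert_of_mem hG₁C,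
        fun h => hFC (h ▸ hG₁C)⟩
    obtain ⟨L₁, L₂, hne12, hl₁, hl₂⟩ := two_leaves Γ₁ hforest hcard
    have key : ∀ L, IsLeaf Γ₁ L → L ≠ F → False := by
      intro L hL hLF
      have hLC : L ∈ C := (Finset.mem_insert.1 hL.1).resolve_left hLF
      have hLS : L ∈ S := (Finset.mem_filter.1 hLC).1
      obtain ⟨J, hJ, hdom⟩ := joint_of_leaf hL hcard
      apply hnoleaf
      refine ⟨L, Finset.mem_of_mem_erase hLS, Or.inr ⟨J, ?_, ?_⟩⟩
      · obtain ⟨hJL, hJΓ⟩ := Finset.mem_erase.1 hJ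
        exact Finset.mem_erase.2 ⟨hJL, hΓ₁D hJΓ⟩
      · intro H hH
        obtain ⟨hHL, hHD⟩ := Finset.mem_erase.1 hH
        by_cases hHΓ : H ∈ Γ₁
        · exact hdom H (Finset.mem_erase.2 ⟨hHL, hHΓ⟩)
        · have hHF : H ≠ F := fun h => hHΓ (h ▸ Finset.mem_insert_self F C)
          have hHS : H ∈ S := Finset.mem_erase.2 ⟨hHF, hHD⟩
          have hHC : H ∉ C := fun h => hHΓ (Finset.mem_insert_of_mem h)
          have hsubF : H ∩ L ⊆ F := by
            by_contra hc
            obtain ⟨x, hxHL, hxF⟩ := Finset.not_subset.1 hc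
            apply hHC
            refine Finset.mem_filter.2 ⟨hHS,
              Relation.ReflTransGen.tail (Finset.mem_filter.1 hLC).2 ?_⟩
            exact ⟨hLS, hHS, ⟨x, Finset.mem_sdiff.2 ⟨Finset.mem_inter.2
              ⟨(Finset.mem_inter.1 hxHL).2, (Finset.mem_inter.1 hxHL).1⟩, hxF⟩⟩⟩
          have hFe : F ∈ Γ₁.erase L :=
            Finset.mem_erase.2 ⟨fun h => hLF h.symm, Finset.mem_insert_self _ _⟩
          intro x hx
          have hx' := Finset.mem_inter.1 hx
          exact hdom F hFe (Finset.mem_inter.2 ⟨hsubF hx, hx'.2⟩)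
    rcases eq_or_ne L₁ F with h | h
    · exact key L₂ hl₂ (fun hh => hne12 (h.trans hh.symm))
    · exact key L₁ hl₁ h

lemma Pack.eq_of_cycle (P : Pack F n f) {D : Finset (Finset V)}
    (hnoleaf : ¬ ∃ L, IsLeaf D L) (hmin : ∀ Γ ⊂ D, Γ.Nonempty → ∃ L, IsLeaf Γ L)
    (hsub : insert F ((Finset.range (n+1)).image f) ⊆ D)
    (sn₁ : StrongNeighbor D F (f 0)) (sn₂ : StrongNeighbor D F (f n)) :
    insert F ((Finset.range (n+1)).image f) = D := by
  classical
  by_contra heq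
  have hss : insert F ((Finset.range (n+1)).image f) ⊂ D := lt_of_le_of_ne hsub heq
  obtain ⟨L, hL⟩ := hmin _ hss ⟨F, Finset.mem_insert_self _ _⟩
  have hmemf : ∀ k, k ≤ n → f k ∈ insert F ((Finset.range (n+1)).image f) := fun k hk =>
    Finset.mem_insert_of_mem (Finset.mem_image_of_mem f (Finset.mem_range.2 (by omega)))
  have hcard : 2 ≤ (insert F ((Finset.range (n+1)).image f)).card := Finset.one_lt_card.2
    ⟨F, Finset.mem_insert_self _ _, f 0, hmemf 0 (by omega),
      fun h => P.nF 0 (by omega) h.symm⟩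
  obtain ⟨J, hJ, hdom⟩ := joint_of_leaf hL hcard
  have hJD : J ∈ D := hsub (Finset.mem_of_mem_erase hJ)
  have hn1 := P.hn
  rcases Finset.mem_insert.1 hL.1 with hLF | hLim
  · subst hLF
    have c1 : f 0 ∩ L ⊆ J ∩ L := hdom (f 0)
      (Finset.mem_erase.2 ⟨P.nF 0 (by omega), hmemf 0 (by omega)⟩)
    have c2 : f n ∩ L ⊆ J ∩ L := hdom (f n)
      (Finset.mem_erase.2 ⟨P.nF n le_rfl, hmemf n le_rfl⟩)
    have hJ0 : J = f 0 := by
      rcases sn₁.2.2.2 J hJD (fun x hx => (Finset.mem_inter.1 (c1 (Finset.mem_inter.2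
        ⟨(Finset.mem_inter.1 hx).2, (Finset.mem_inter.1 hx).1⟩))).1) with h | h
      · exact absurd h (Finset.mem_erase.1 hJ).1
      · exact h
    have hJn : J = f n := by
      rcases sn₂.2.2.2 J hJD (fun x hx => (Finset.mem_inter.1 (c2 (Finset.mem_inter.2
        ⟨(Finset.mem_inter.1 hx).2, (Finset.mem_inter.1 hx).1⟩))).1) with h | h
      · exact absurd h (Finset.mem_erase.1 hJ).1
      · exact h
    have := P.inj 0 (by omega) n le_rfl (hJ0 ▸ hJn)
    omega
  · obtain ⟨k, hkr, hkL⟩ := Finset.mem_image.1 hLim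
    have hk : k ≤ n := by have := Finset.mem_range.1 hkr; omega
    subst hkL
    by_cases hk0 : k = 0
    · subst hk0
      have hJ1 : J = f 1 := P.joint_succ (Finset.Subset.refl _) (by omega)
        (hmemf 1 (by omega)) hJ hdom
      have hc : F ∩ f 0 ⊆ f 1 := by
        have := hdom F (Finset.mem_erase.2 ⟨Ne.symm (P.nF 0 (by omega)),
          Finset.mem_insert_self _ _⟩)
        rw [hJ1] at this
        exact this.trans Finset.inter_subset_left
      rcases sn₁.2.2.2 (f 1) (hsub (hmemf 1 (by omega))) hc with h | h
      · exact P.nF 1 (by omega) h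
      · have := P.inj 1 (by omega) 0 (by omega) h; omega
    · by_cases hkn : k = n
      · rw [hkn] at hJ hdom
        have hJ1 : J = f (n-1) := P.joint_pred (Finset.Subset.refl _) (by omega) le_rfl
          (hmemf (n-1) (by omega)) hJ hdom
        have hc : F ∩ f n ⊆ f (n-1) := by
          have := hdom F (Finset.mem_erase.2 ⟨Ne.symm (P.nF n le_rfl),
            Finset.mem_insert_self _ _⟩)
          rw [hJ1] at this
          exact this.trans Finset.inter_subset_left
        rcases sn₂.2.2.2 (f (n-1)) (hsub (hmemf (n-1) (by omega))) hc with h | h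
        · exact P.nF (n-1) (by omega) h
        · have := P.inj (n-1) (by omega) n le_rfl h; omega
      · exact P.not_leaf_interior (Finset.Subset.refl _) (by omega) (by omega)
          (hmemf (k-1) (by omega)) (hmemf (k+1) (by omega)) hL
lemma Pack.core_subset (P : Pack F n f) {D : Finset (Finset V)}
    (hmin : ∀ Γ ⊂ D, Γ.Nonempty → ∃ L, IsLeaf Γ L)
    (hIm : insert F ((Finset.range (n+1)).image f) = D) :
    ∀ k ≤ n, f 0 ∩ f n ⊆ f k := by
  classical
  have hn1 := P.hn
  have arc : ∀ j m, j < m → m ≤ n → (f m ∩ f j ⊆ f (j+1)) ∨ (f j ∩ f m ⊆ f (m-1)) := by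
    intro j m hjm hm
    set Γ := (Finset.Icc j m).image f with hΓdef
    have hΓsub : Γ ⊆ insert F ((Finset.range (n+1)).image f) := by
      intro A hA
      obtain ⟨k, hk, he⟩ := Finset.mem_image.1 hA
      obtain ⟨h1, h2⟩ := Finset.mem_Icc.1 hk
      exact Finset.mem_insert_of_mem (Finset.mem_image.2 ⟨k, Finset.mem_range.2 (by omega), he⟩)
    have hmemΓ : ∀ k, j ≤ k → k ≤ m → f k ∈ Γ := fun k h1 h2 =>
      Finset.mem_image_of_mem f (Finset.mem_Icc.2 ⟨h1, h2⟩)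
    have hss : Γ ⊂ D := by
      rw [← hIm]
      refine (Finset.ssubset_iff_of_subset hΓsub).2 ⟨F, Finset.mem_insert_self _ _, ?_⟩
      intro hFΓ
      obtain ⟨k, hk, he⟩ := Finset.mem_image.1 hFΓ
      obtain ⟨h1, h2⟩ := Finset.mem_Icc.1 hk
      exact P.nF k (by omega) he
    obtain ⟨L, hL⟩ := hmin Γ hss ⟨f j, hmemΓ j le_rfl (by omega)⟩
    have hcard : 2 ≤ Γ.card := Finset.one_lt_card.2
      ⟨f j, hmemΓ j le_rfl (by omega), f m, hmemΓ m (by omega) le_rfl,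
        fun h => by have := P.inj j (by omega) m (by omega) h; omega⟩
    obtain ⟨J, hJ, hdom⟩ := joint_of_leaf hL hcard
    obtain ⟨k, hk, he⟩ := Finset.mem_image.1 hL.1
    obtain ⟨hjk, hkm⟩ := Finset.mem_Icc.1 hk
    by_cases hkj : k = j
    · left
      rw [hkj] at he
      rw [← he] at hJ hdom
      have hJ1 : J = f (j+1) := P.joint_succ hΓsub (by omega)
        (hmemΓ (j+1) (by omega) (by omega)) hJ hdom
      have := hdom (f m) (Finset.mem_erase.2
        ⟨fun h => by have := P.inj m (by omega) j (by omega) h; omega,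
          hmemΓ m (by omega) le_rfl⟩)
      rw [hJ1] at this
      exact this.trans Finset.inter_subset_left
    · by_cases hkm' : k = m
      · right
        rw [hkm'] at he
        rw [← he] at hJ hdom
        have hJ1 : J = f (m-1) := P.joint_pred hΓsub (by omega) (by omega)
          (hmemΓ (m-1) (by omega) (by omega)) hJ hdom
        have := hdom (f j) (Finset.mem_erase.2
          ⟨fun h => by have := P.inj j (by omega) m (by omega) h; omega,
            hmemΓ j le_rfl (by omega)⟩)
        rw [hJ1] at this
        exact this.trans Finset.inter_subset_left
      · exfalso
        rw [← he] at hL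
        exact P.not_leaf_interior hΓsub (by omega) (by omega)
          (hmemΓ (k-1) (by omega) (by omega)) (hmemΓ (k+1) (by omega) (by omega)) hL
  have main : ∀ d j m, m - j = d → j < m → m ≤ n → f 0 ∩ f n ⊆ f j → f 0 ∩ f n ⊆ f m →
      ∀ k, j ≤ k → k ≤ m → f 0 ∩ f n ⊆ f k := by
    intro d
    induction d using Nat.strong_induction_on with
    | _ d ih =>
      intro j m hd hjm hm hj hm' k hk1 hk2
      rcases eq_or_lt_of_le hk1 with h | h
      · rw [← h]; exact hj
      rcases eq_or_lt_of_le hk2 with h2 | h2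
      · rw [h2]; exact hm'
      rcases arc j m hjm hm with ha | ha
      · have hnext : f 0 ∩ f n ⊆ f (j+1) := fun x hx =>
          ha (Finset.mem_inter.2 ⟨hm' hx, hj hx⟩)
        exact ih (m - (j+1)) (by omega) (j+1) m rfl (by omega) hm hnext hm' k (by omega) hk2
      · have hnext : f 0 ∩ f n ⊆ f (m-1) := fun x hx =>
          ha (Finset.mem_inter.2 ⟨hj hx, hm' hx⟩)
        exact ih ((m-1) - j) (by omega) j (m-1) rfl (by omega) (by omega) hj hnext k hk1 (by omega)
  intro k hk
  exact main n 0 n (by omega) (by omega) le_rfl Finset.inter_subset_left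
    Finset.inter_subset_right k (by omega) hk

lemma Pack.tail_subset (P : Pack F n f) {D : Finset (Finset V)}
    (hmin : ∀ Γ ⊂ D, Γ.Nonempty → ∃ L, IsLeaf Γ L)
    (hIm : insert F ((Finset.range (n+1)).image f) = D)
    (sn₂ : StrongNeighbor D F (f n)) :
    ∀ i, 1 ≤ i → i < n → f i ∩ F ⊆ f n := by
  classical
  have hn1 := P.hn
  have hfD : ∀ k, k ≤ n → f k ∈ D := fun k hk => by
    rw [← hIm]
    exact Finset.mem_insert_of_mem (Finset.mem_image.2 ⟨k, Finset.mem_range.2 (by omega), rfl⟩)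
  have T : ∀ i, 1 ≤ i → i < n →
      (F ∩ f i ⊆ f (i+1)) ∨ (∀ k, i ≤ k → k ≤ n → f k ∩ F ⊆ f n ∩ F) := by
    intro i h1 h2
    set Γ := insert F ((Finset.Icc i n).image f) with hΓdef
    have hΓsub : Γ ⊆ insert F ((Finset.range (n+1)).image f) := by
      intro A hA
      rcases Finset.mem_insert.1 hA with h | h
      · exact h ▸ Finset.mem_insert_self _ _
      · obtain ⟨k, hk, he⟩ := Finset.mem_image.1 h
        obtain ⟨ha, hb⟩ := Finset.mem_Icc.1 hk
        exact Finset.mem_insert_of_mem (Finset.mem_image.2 ⟨k, Finset.mem_range.2 (by omega), he⟩)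
    have hmemΓ : ∀ k, i ≤ k → k ≤ n → f k ∈ Γ := fun k ha hb =>
      Finset.mem_insert_of_mem (Finset.mem_image_of_mem f (Finset.mem_Icc.2 ⟨ha, hb⟩))
    have hss : Γ ⊂ D := by
      rw [← hIm]
      refine (Finset.ssubset_iff_of_subset hΓsub).2
        ⟨f 0, Finset.mem_insert_of_mem (Finset.mem_image.2 ⟨0, Finset.mem_range.2 (by omega), rfl⟩), ?_⟩
      intro hΓ0
      rcases Finset.mem_insert.1 hΓ0 with h | h
      · exact P.nF 0 (by omega) h
      · obtain ⟨k, hk, he⟩ := Finset.mem_image.1 h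
        obtain ⟨ha, hb⟩ := Finset.mem_Icc.1 hk
        have := P.inj k (by omega) 0 (by omega) he
        omega
    obtain ⟨L, hL⟩ := hmin Γ hss ⟨F, Finset.mem_insert_self _ _⟩
    have hcard : 2 ≤ Γ.card := Finset.one_lt_card.2
      ⟨F, Finset.mem_insert_self _ _, f n, hmemΓ n (by omega) le_rfl,
        fun h => P.nF n le_rfl h.symm⟩
    obtain ⟨J, hJ, hdom⟩ := joint_of_leaf hL hcard
    rcases Finset.mem_insert.1 hL.1 with hLF | hLim
    · right
      rw [hLF] at hJ hdom
      have hJD : J ∈ D := by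
        rw [← hIm]
        exact hΓsub (Finset.mem_of_mem_erase hJ)
      have hc : F ∩ f n ⊆ J := by
        have := hdom (f n) (Finset.mem_erase.2 ⟨P.nF n le_rfl, hmemΓ n (by omega) le_rfl⟩)
        intro x hx
        have hx' := Finset.mem_inter.1 hx
        exact (Finset.mem_inter.1 (this (Finset.mem_inter.2 ⟨hx'.2, hx'.1⟩))).1
      have hJn : J = f n := by
        rcases sn₂.2.2.2 J hJD hc with h | h
        · exact absurd h (Finset.mem_erase.1 hJ).1
        · exact h
      intro k hk1 hk2
      have := hdom (f k) (Finset.mem_erase.2 ⟨P.nF k hk2, hmemΓ k hk1 hk2⟩)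
      rw [hJn] at this
      exact this
    · obtain ⟨k, hk, he⟩ := Finset.mem_image.1 hLim
      obtain ⟨hik, hkn⟩ := Finset.mem_Icc.1 hk
      by_cases hki : k = i
      · left
        rw [hki] at he
        rw [← he] at hJ hdom
        have hJ1 : J = f (i+1) := P.joint_succ hΓsub (by omega)
          (hmemΓ (i+1) (by omega) (by omega)) hJ hdom
        have := hdom F (Finset.mem_erase.2
          ⟨Ne.symm (P.nF i (by omega)), Finset.mem_insert_self _ _⟩)
        rw [hJ1] at this
        exact this.trans Finset.inter_subset_left
      · by_cases hkn' : k = n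
        · exfalso
          rw [hkn'] at he
          rw [← he] at hJ hdom
          have hJ1 : J = f (n-1) := P.joint_pred hΓsub (by omega) le_rfl
            (hmemΓ (n-1) (by omega) (by omega)) hJ hdom
          have hc : F ∩ f n ⊆ f (n-1) := by
            have := hdom F (Finset.mem_erase.2
              ⟨Ne.symm (P.nF n le_rfl), Finset.mem_insert_self _ _⟩)
            rw [hJ1] at this
            exact this.trans Finset.inter_subset_left
          rcases sn₂.2.2.2 (f (n-1)) (hfD (n-1) (by omega)) hc with h | h
          · exact P.nF (n-1) (by omega) h
          · have := P.inj (n-1) (by omega) n le_rfl h; omega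
        · exfalso
          rw [← he] at hL
          exact P.not_leaf_interior hΓsub (by omega) (by omega)
            (hmemΓ (k-1) (by omega) (by omega)) (hmemΓ (k+1) (by omega) (by omega)) hL
  have Q : ∀ d i, 1 ≤ i → i < n → n - 1 - i = d → f i ∩ F ⊆ f n := by
    intro d
    induction d with
    | zero =>
      intro i ha hb hd
      rcases T i ha hb with h | h
      · have hin : i + 1 = n := by omega
        rw [← hin]
        intro x hx
        have hx' := Finset.mem_inter.1 hx
        exact h (Finset.mem_inter.2 ⟨hx'.2, hx'.1⟩)
      · exact (h i le_rfl (by omega)).trans Finset.inter_subset_left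
    | succ d ihd =>
      intro i ha hb hd
      rcases T i ha hb with h | h
      · intro x hx
        have hx' := Finset.mem_inter.1 hx
        have hx1 : x ∈ f (i+1) := h (Finset.mem_inter.2 ⟨hx'.2, hx'.1⟩)
        exact ihd (i+1) (by omega) (by omega) (by omega) (Finset.mem_inter.2 ⟨hx1, hx'.2⟩)
      · exact (h i le_rfl (by omega)).trans Finset.inter_subset_left
  intro i h1 h2
  exact Q (n - 1 - i) i h1 h2 rfl
lemma mem_residue {Δ : Finset (Finset V)} {F G₁ G₂ A : Finset V} :
    A ∈ residue Δ F G₁ G₂ ↔ (A ∈ Δ ∧ A ∩ F = G₁ ∩ G₂) ∨ A = G₁ ∨ A = G₂ := by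
  unfold residue
  simp only [Finset.mem_union, Finset.mem_filter, Finset.mem_insert, Finset.mem_singleton]

lemma backward {Δ : Finset (Finset V)} {F G₁ G₂ : Finset V} (h3 : G₁ ≠ G₂)
    {D : Finset (Finset V)} (hsubΔ : D ⊆ Δ) (hcyc : IsCycle D)
    (hFD : F ∈ D) (hG₁D : G₁ ∈ D) (hG₂D : G₂ ∈ D)
    (sn₁ : StrongNeighbor D F G₁) (sn₂ : StrongNeighbor D F G₂) :
    TripleCondition Δ F G₁ G₂ := by
  classical
  obtain ⟨hDne, hnoleaf, hmin⟩ := hcyc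
  have hFG₁ : F ≠ G₁ := sn₁.2.2.1
  have hFG₂ : F ≠ G₂ := sn₂.2.2.1
  have hrtg := cycle_outside_connected ⟨hDne, hnoleaf, hmin⟩ hFD
    (Finset.mem_erase.2 ⟨Ne.symm hFG₁, hG₁D⟩) G₂ (Finset.mem_erase.2 ⟨Ne.symm hFG₂, hG₂D⟩)
  obtain ⟨n, f, hn1, f0, fn, hmem, hedge, hnosc, hinj⟩ :=
    exists_pack (D.erase F) F G₁ G₂ h3 hrtg
  have P : Pack F n f := ⟨hn1, hedge, hnosc, hinj,
    fun i hi => (Finset.mem_erase.1 (hmem i hi)).1⟩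
  have hsubp : insert F ((Finset.range (n+1)).image f) ⊆ D := by
    intro A hA
    rcases Finset.mem_insert.1 hA with h | h
    · exact h ▸ hFD
    · obtain ⟨k, hk, he⟩ := Finset.mem_image.1 h
      exact he ▸ Finset.mem_of_mem_erase (hmem k (by have := Finset.mem_range.1 hk; omega))
  have sn₁' : StrongNeighbor D F (f 0) := by rw [f0]; exact sn₁
  have sn₂' : StrongNeighbor D F (f n) := by rw [fn]; exact sn₂
  have hIm := P.eq_of_cycle hnoleaf hmin hsubp sn₁' sn₂'
  have hQ2 : ∀ i, 1 ≤ i → i < n → f i ∩ F ⊆ G₂ := by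
    have h := P.tail_subset hmin hIm sn₂'
    intro i h1 h2
    rw [← fn]
    exact h i h1 h2
  have hQ1 : ∀ i, 1 ≤ i → i < n → f i ∩ F ⊆ G₁ := by
    have Pr : Pack F n (fun i => f (n - i)) := P.rev
    have hImr : insert F ((Finset.range (n+1)).image (fun i => f (n - i))) = D := by
      rw [rev_image]; exact hIm
    have sn₁'' : StrongNeighbor D F ((fun i => f (n - i)) n) := by
      show StrongNeighbor D F (f (n - n))
      rw [show n - n = 0 by omega]
      exact sn₁'
    have h := Pr.tail_subset hmin hImr sn₁''
    intro i h1 h2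
    have h' := h (n - i) (by omega) (by omega)
    rw [show n - (n - i) = i by omega, show n - n = 0 by omega] at h'
    rw [← f0]
    exact h'
  have hmemD : ∀ k, k ≤ n → f k ∈ D := fun k hk => Finset.mem_of_mem_erase (hmem k hk)
  have hDlist : ∀ H ∈ D.erase F, ∃ k ≤ n, f k = H := by
    intro H hH
    have hHD : H ∈ insert F ((Finset.range (n+1)).image f) := by
      rw [hIm]; exact Finset.mem_of_mem_erase hH
    rcases Finset.mem_insert.1 hHD with h | h
    · exact absurd h (Finset.mem_erase.1 hH).1
    · obtain ⟨k, hk, he⟩ := Finset.mem_image.1 h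
      exact ⟨k, by have := Finset.mem_range.1 hk; omega, he⟩
  have ha : ¬ (G₁ ∩ F ⊆ G₂ ∩ F) := by
    intro hcon
    apply hnoleaf
    refine ⟨F, hFD, Or.inr ⟨G₂, Finset.mem_erase.2 ⟨Ne.symm hFG₂, hG₂D⟩, ?_⟩⟩
    intro H hH
    obtain ⟨k, hk, he⟩ := hDlist H hH
    rw [← he]
    by_cases hk0 : k = 0
    · rw [hk0, f0]; exact hcon
    · by_cases hkn : k = n
      · rw [hkn, fn]
      · intro x hx
        have hx' := Finset.mem_inter.1 hx
        exact Finset.mem_inter.2 ⟨hQ2 k (by omega) (by omega) hx, hx'.2⟩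
  have hb : ¬ (G₂ ∩ F ⊆ G₁ ∩ F) := by
    intro hcon
    apply hnoleaf
    refine ⟨F, hFD, Or.inr ⟨G₁, Finset.mem_erase.2 ⟨Ne.symm hFG₁, hG₁D⟩, ?_⟩⟩
    intro H hH
    obtain ⟨k, hk, he⟩ := hDlist H hH
    rw [← he]
    by_cases hk0 : k = 0
    · rw [hk0, f0]
    · by_cases hkn : k = n
      · rw [hkn, fn]; exact hcon
      · intro x hx
        have hx' := Finset.mem_inter.1 hx
        exact Finset.mem_inter.2 ⟨hQ1 k (by omega) (by omega) hx, hx'.2⟩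
  have hG₁r : G₁ ∈ residue Δ F G₁ G₂ := mem_residue.2 (Or.inr (Or.inl rfl))
  have hG₂r : G₂ ∈ residue Δ F G₁ G₂ := mem_residue.2 (Or.inr (Or.inr rfl))
  refine ⟨ha, hb, hG₁r, hG₂r, ?_⟩
  have hres : ∀ k, k ≤ n → f k ∈ residue Δ F G₁ G₂ := by
    intro k hk
    by_cases hk0 : k = 0
    · rw [hk0, f0]; exact hG₁r
    · by_cases hkn : k = n
      · rw [hkn, fn]; exact hG₂r
      · refine mem_residue.2 (Or.inl ⟨hsubΔ (hmemD k hk), ?_⟩)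
        apply Finset.Subset.antisymm
        · intro x hx
          exact Finset.mem_inter.2 ⟨hQ1 k (by omega) (by omega) hx,
            hQ2 k (by omega) (by omega) hx⟩
        · have hc := P.core_subset hmin hIm k hk
          have hF' : f 0 ∩ f n ⊆ F := by
            intro x hx
            by_contra hxF
            have hx2 : x ∈ (f 0 ∩ f n) \ F := Finset.mem_sdiff.2 ⟨hx, hxF⟩
            rw [hnosc 0 n (by omega) le_rfl] at hx2
            exact absurd hx2 (Finset.notMem_empty x)
          intro x hx
          rw [← f0, ← fn] at hx
          exact Finset.mem_inter.2 ⟨hc hx, hF' hx⟩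
  have hchain : ∀ k, k ≤ n → Relation.ReflTransGen
      (fun A B => A ∈ residue Δ F G₁ G₂ ∧ B ∈ residue Δ F G₁ G₂ ∧ ((A ∩ B) \ F).Nonempty)
      (f 0) (f k) := by
    intro k
    induction k with
    | zero => intro _; exact Relation.ReflTransGen.refl
    | succ k ih =>
      intro hk
      exact Relation.ReflTransGen.tail (ih (by omega))
        ⟨hres k (by omega), hres (k+1) hk, hedge k (by omega)⟩
  have := hchain n le_rfl
  rw [f0, fn] at this
  exact this
lemma forward {Δ : Finset (Finset V)} (hΔ : IsFacetComplex Δ) {F G₁ G₂ : Finset V}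
    (hF : F ∈ Δ) (hG₁ : G₁ ∈ Δ) (hG₂ : G₂ ∈ Δ)
    (h1 : F ≠ G₁) (h2 : F ≠ G₂) (h3 : G₁ ≠ G₂)
    (htc : TripleCondition Δ F G₁ G₂) :
    ∃ D, D ⊆ Δ ∧ (IsCycle D ∧ F ∈ D ∧ G₁ ∈ D ∧ G₂ ∈ D ∧
      StrongNeighbor D F G₁ ∧ StrongNeighbor D F G₂) := by
  classical
  obtain ⟨ha, hb, hG₁r, hG₂r, hrtg⟩ := htc
  have hFres : F ∉ residue Δ F G₁ G₂ := by
    intro hc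
    rcases mem_residue.1 hc with ⟨_, hFF⟩ | h | h
    · rw [Finset.inter_self] at hFF
      have : F ⊆ G₁ := by rw [hFF]; exact Finset.inter_subset_left
      exact h1 (hΔ F hF G₁ hG₁ this)
    · exact h1 h
    · exact h2 h
  obtain ⟨n, f, hn1, f0, fn, hmem, hedge, hnosc, hinj⟩ :=
    exists_pack (residue Δ F G₁ G₂) F G₁ G₂ h3 hrtg
  have hnF : ∀ i, i ≤ n → f i ≠ F := fun i hi he => hFres (he ▸ hmem i hi)
  have P : Pack F n f := ⟨hn1, hedge, hnosc, hinj, hnF⟩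
  have hint : ∀ k, 1 ≤ k → k < n → f k ∈ Δ ∧ f k ∩ F = G₁ ∩ G₂ := by
    intro k hk1 hk2
    rcases mem_residue.1 (hmem k (by omega)) with h | h | h
    · exact h
    · exfalso
      rw [← f0] at h
      have := hinj k (by omega) 0 (by omega) h
      omega
    · exfalso
      rw [← fn] at h
      have := hinj k (by omega) n le_rfl h
      omega
  have hfΔ : ∀ k, k ≤ n → f k ∈ Δ := by
    intro k hk
    by_cases hk0 : k = 0
    · rw [hk0, f0]; exact hG₁
    · by_cases hkn : k = n
      · rw [hkn, fn]; exact hG₂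
      · exact (hint k (by omega) (by omega)).1
  set D := insert F ((Finset.range (n+1)).image f) with hD
  have hmemf : ∀ k, k ≤ n → f k ∈ D := fun k hk =>
    Finset.mem_insert_of_mem (Finset.mem_image_of_mem f (Finset.mem_range.2 (by omega)))
  have hFD : F ∈ D := Finset.mem_insert_self _ _
  have hG₁D : G₁ ∈ D := by rw [← f0]; exact hmemf 0 (by omega)
  have hG₂D : G₂ ∈ D := by rw [← fn]; exact hmemf n le_rfl
  have hsubΔ : D ⊆ Δ := by
    intro A hA
    rcases Finset.mem_insert.1 hA with h | h
    · exact h ▸ hF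
    · obtain ⟨k, hkr, he⟩ := Finset.mem_image.1 h
      exact he ▸ hfΔ k (by have := Finset.mem_range.1 hkr; omega)
  have hcontra_a : ∀ k, k ≤ n → k ≠ 0 → F ∩ G₁ ⊆ f k → False := by
    intro k hk hk0 hsub
    apply ha
    intro x hx
    have hx' := Finset.mem_inter.1 hx
    have hxf : x ∈ f k := hsub (Finset.mem_inter.2 ⟨hx'.2, hx'.1⟩)
    by_cases hkn : k = n
    · rw [hkn, fn] at hxf
      exact Finset.mem_inter.2 ⟨hxf, hx'.2⟩
    · have hxkF : x ∈ f k ∩ F := Finset.mem_inter.2 ⟨hxf, hx'.2⟩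
      rw [(hint k (by omega) (by omega)).2] at hxkF
      exact Finset.mem_inter.2 ⟨(Finset.mem_inter.1 hxkF).2, hx'.2⟩
  have hcontra_b : ∀ k, k ≤ n → k ≠ n → F ∩ G₂ ⊆ f k → False := by
    intro k hk hkn hsub
    apply hb
    intro x hx
    have hx' := Finset.mem_inter.1 hx
    have hxf : x ∈ f k := hsub (Finset.mem_inter.2 ⟨hx'.2, hx'.1⟩)
    by_cases hk0 : k = 0
    · rw [hk0, f0] at hxf
      exact Finset.mem_inter.2 ⟨hxf, hx'.2⟩
    · have hxkF : x ∈ f k ∩ F := Finset.mem_inter.2 ⟨hxf, hx'.2⟩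
      rw [(hint k (by omega) (by omega)).2] at hxkF
      exact Finset.mem_inter.2 ⟨(Finset.mem_inter.1 hxkF).1, hx'.2⟩
  have snn₁ : StrongNeighbor D F G₁ := by
    refine ⟨hFD, hG₁D, h1, ?_⟩
    intro H hH hsub
    rcases Finset.mem_insert.1 hH with h | h
    · exact Or.inl h
    · obtain ⟨k, hkr, he⟩ := Finset.mem_image.1 h
      have hk : k ≤ n := by have := Finset.mem_range.1 hkr; omega
      by_cases hk0 : k = 0
      · right; rw [← he, hk0, f0]
      · exfalso
        exact hcontra_a k hk hk0 (by rw [he]; exact hsub)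
  have snn₂ : StrongNeighbor D F G₂ := by
    refine ⟨hFD, hG₂D, h2, ?_⟩
    intro H hH hsub
    rcases Finset.mem_insert.1 hH with h | h
    · exact Or.inl h
    · obtain ⟨k, hkr, he⟩ := Finset.mem_image.1 h
      have hk : k ≤ n := by have := Finset.mem_range.1 hkr; omega
      by_cases hkn : k = n
      · right; rw [← he, hkn, fn]
      · exfalso
        exact hcontra_b k hk hkn (by rw [he]; exact hsub)
  have hnoleaf : ¬ ∃ L, IsLeaf D L := by
    rintro ⟨L, hL⟩
    have hcard : 2 ≤ D.card := Finset.one_lt_card.2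
      ⟨F, hFD, f 0, hmemf 0 (by omega), fun h => hnF 0 (by omega) h.symm⟩
    obtain ⟨J, hJ, hdom⟩ := joint_of_leaf hL hcard
    rcases Finset.mem_insert.1 hL.1 with hLF | hLim
    · rw [hLF] at hJ hdom
      have c1 := hdom (f 0) (Finset.mem_erase.2 ⟨hnF 0 (by omega), hmemf 0 (by omega)⟩)
      have c2 := hdom (f n) (Finset.mem_erase.2 ⟨hnF n le_rfl, hmemf n le_rfl⟩)
      rcases Finset.mem_insert.1 (Finset.mem_of_mem_erase hJ) with h | h
      · exact (Finset.mem_erase.1 hJ).1 h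
      · obtain ⟨k, hkr, he⟩ := Finset.mem_image.1 h
        have hk : k ≤ n := by have := Finset.mem_range.1 hkr; omega
        rw [← he] at c1 c2
        by_cases hk0 : k = 0
        · apply hb
          rw [hk0, f0] at c2
          intro x hx
          rw [← fn] at hx
          have := c2 hx
          rw [f0] at c1
          exact Finset.mem_inter.2 ⟨(Finset.mem_inter.1 this).1, (Finset.mem_inter.1 hx).2⟩
        · by_cases hkn : k = n
          · apply ha
            rw [hkn, fn] at c1
            intro x hx
            rw [← f0] at hx
            have := c1 hx
            exact Finset.mem_inter.2 ⟨(Finset.mem_inter.1 this).1, (Finset.mem_inter.1 hx).2⟩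
          · apply ha
            intro x hx
            rw [← f0] at hx
            have hxk : x ∈ f k ∩ F := by
              have := c1 hx
              exact Finset.mem_inter.2 ⟨(Finset.mem_inter.1 this).1, (Finset.mem_inter.1 hx).2⟩
            rw [(hint k (by omega) (by omega)).2] at hxk
            exact Finset.mem_inter.2 ⟨(Finset.mem_inter.1 hxk).2, (Finset.mem_inter.1 hx).2⟩
    · obtain ⟨k, hkr, he⟩ := Finset.mem_image.1 hLim
      have hk : k ≤ n := by have := Finset.mem_range.1 hkr; omega
      rw [← he] at hL hJ hdom
      by_cases hk0 : k = 0
      · rw [hk0] at hJ hdom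
        have hJ1 : J = f 1 := P.joint_succ (Finset.Subset.refl _) (by omega)
          (hmemf 1 (by omega)) hJ hdom
        have hc := hdom F (Finset.mem_erase.2 ⟨Ne.symm (hnF 0 (by omega)),
          Finset.mem_insert_self _ _⟩)
        rw [hJ1] at hc
        have hsub : F ∩ G₁ ⊆ f 1 := by
          rw [← f0]
          exact hc.trans Finset.inter_subset_left
        exact hcontra_a 1 (by omega) (by omega) hsub
      · by_cases hkn : k = n
        · rw [hkn] at hJ hdom
          have hJ1 : J = f (n-1) := P.joint_pred (Finset.Subset.refl _) (by omega) le_rfl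
            (hmemf (n-1) (by omega)) hJ hdom
          have hc := hdom F (Finset.mem_erase.2 ⟨Ne.symm (hnF n le_rfl),
            Finset.mem_insert_self _ _⟩)
          rw [hJ1] at hc
          have hsub : F ∩ G₂ ⊆ f (n-1) := by
            rw [← fn]
            exact hc.trans Finset.inter_subset_left
          exact hcontra_b (n-1) (by omega) (by omega) hsub
        · exact P.not_leaf_interior (Finset.Subset.refl _) (by omega) (by omega)
            (hmemf (k-1) (by omega)) (hmemf (k+1) (by omega)) hL
  have hminD : ∀ Γ ⊂ D, Γ.Nonempty → ∃ L, IsLeaf Γ L := by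
    intro Γ hss hne
    by_cases hn2 : n = 1
    · apply leaf_of_card_le_two hne
      have hcD : D.card ≤ n + 2 := by
        calc D.card ≤ ((Finset.range (n+1)).image f).card + 1 := Finset.card_insert_le _ _
          _ ≤ (Finset.range (n+1)).card + 1 := by
              exact Nat.add_le_add_right (Finset.card_image_le) 1
          _ = n + 2 := by rw [Finset.card_range]
      have := Finset.card_lt_card hss
      omega
    · have hn2' : 2 ≤ n := by omega
      have hIF : G₁ ∩ G₂ ⊆ F := by
        intro x hx
        by_contra hxF
        have hx2 : x ∈ (f 0 ∩ f n) \ F := by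
          rw [f0, fn]
          exact Finset.mem_sdiff.2 ⟨hx, hxF⟩
        rw [hnosc 0 n (by omega) le_rfl] at hx2
        exact absurd hx2 (Finset.notMem_empty x)
      have hIsub : ∀ k, k ≤ n → G₁ ∩ G₂ ⊆ f k := by
        intro k hk
        by_cases hk0 : k = 0
        · rw [hk0, f0]; exact Finset.inter_subset_left
        · by_cases hkn : k = n
          · rw [hkn, fn]; exact Finset.inter_subset_right
          · intro x hx
            have : x ∈ f k ∩ F := by
              rw [(hint k (by omega) (by omega)).2]
              exact hx
            exact (Finset.mem_inter.1 this).1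
      have hINT2 : ∀ a b, a + 2 ≤ b → b ≤ n → f a ∩ f b ⊆ G₁ ∩ G₂ := by
        intro a b hab hbn x hx
        have hx' := Finset.mem_inter.1 hx
        have hxF : x ∈ F := by
          by_contra hxF
          have hx2 : x ∈ (f a ∩ f b) \ F := Finset.mem_sdiff.2 ⟨hx, hxF⟩
          rw [hnosc a b hab hbn] at hx2
          exact absurd hx2 (Finset.notMem_empty x)
        by_cases ha0 : a = 0
        · by_cases hbn' : b = n
          · rw [ha0, f0] at hx'
            rw [hbn', fn] at hx'
            exact Finset.mem_inter.2 ⟨hx'.1, hx'.2⟩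
          · have hxk : x ∈ f b ∩ F := Finset.mem_inter.2 ⟨hx'.2, hxF⟩
            rw [(hint b (by omega) (by omega)).2] at hxk
            exact hxk
        · have hxk : x ∈ f a ∩ F := Finset.mem_inter.2 ⟨hx'.1, hxF⟩
          rw [(hint a (by omega) (by omega)).2] at hxk
          exact hxk
      by_cases hFΓ : F ∈ Γ
      · have hmiss : ∃ i, i ≤ n ∧ f i ∉ Γ := by
          by_contra hc
          push_neg at hc
          have hDsub : D ⊆ Γ := by
            intro A hA
            rcases Finset.mem_insert.1 hA with h | h
            · exact h ▸ hFΓ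
            · obtain ⟨k, hkr, he⟩ := Finset.mem_image.1 h
              exact he ▸ hc k (by have := Finset.mem_range.1 hkr; omega)
          exact (lt_iff_le_not_ge.1 hss).2 hDsub
        obtain ⟨i, hi, hfiΓ⟩ := hmiss
        set Qf : ℕ → Finset V := fun t =>
          if t < n - i then f (i+1+t) else if t = n - i then F else f (t - (n - i) - 1)
          with hQf
        have q1 : ∀ t, t < n - i → Qf t = f (i+1+t) := fun t ht => if_pos ht
        have q2 : Qf (n - i) = F := by
          rw [hQf]
          simp
        have q3 : ∀ t, n - i < t → Qf t = f (t - (n - i) - 1) := fun t ht => by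
          rw [hQf]
          simp only [if_neg (by omega : ¬ t < n - i), if_neg (by omega : ¬ t = n - i)]
        have hQcov : ∀ A ∈ Γ, ∃ t, t ≤ n ∧ Qf t = A := by
          intro A hA
          have hAΔ' : A ∈ D := hss.1 hA
          rcases Finset.mem_insert.1 hAΔ' with h | h
          · exact ⟨n - i, by omega, by rw [q2, h]⟩
          · obtain ⟨k, hkr, he⟩ := Finset.mem_image.1 h
            have hk : k ≤ n := by have := Finset.mem_range.1 hkr; omega
            have hki : k ≠ i := by
              intro hh
              apply hfiΓ
              rw [← hh, he]
              exact hA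
            by_cases hgt : i < k
            · refine ⟨k - i - 1, by omega, ?_⟩
              rw [q1 _ (by omega), show i+1+(k-i-1) = k by omega]
              exact he
            · refine ⟨n - i + 1 + k, by omega, ?_⟩
              rw [q3 _ (by omega), show n-i+1+k - (n-i) - 1 = k by omega]
              exact he
        set T := (Finset.range (n+1)).filter (fun t => Qf t ∈ Γ) with hTdef
        have hTmem : ∀ t ∈ T, t ≤ n ∧ Qf t ∈ Γ := by
          intro t ht
          have h := Finset.mem_filter.1 ht
          exact ⟨by have := Finset.mem_range.1 h.1; omega, h.2⟩
        have hΓT : Γ = T.image Qf := by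
          apply Finset.Subset.antisymm
          · intro A hA
            obtain ⟨t, ht, he⟩ := hQcov A hA
            exact Finset.mem_image.2 ⟨t, Finset.mem_filter.2
              ⟨Finset.mem_range.2 (by omega), by rw [he]; exact hA⟩, he⟩
          · intro A hA
            obtain ⟨t, ht, he⟩ := Finset.mem_image.1 hA
            rw [← he]
            exact (Finset.mem_filter.1 ht).2
        have hQinj : ∀ s ∈ T, ∀ t ∈ T, Qf s = Qf t → s = t := by
          intro s hs t ht he
          have hsn := (hTmem s hs).1
          have htn := (hTmem t ht).1
          rcases lt_trichotomy s (n - i) with h1 | h1 | h1 <;>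
            rcases lt_trichotomy t (n - i) with h2 | h2 | h2
          · rw [q1 s h1, q1 t h2] at he
            have := hinj (i+1+s) (by omega) (i+1+t) (by omega) he
            omega
          · rw [q1 s h1, h2, q2] at he
            exact absurd he (hnF (i+1+s) (by omega))
          · rw [q1 s h1, q3 t h2] at he
            have := hinj (i+1+s) (by omega) (t - (n-i) - 1) (by omega) he
            omega
          · rw [h1, q2, q1 t h2] at he
            exact absurd he.symm (hnF (i+1+t) (by omega))
          · omega
          · rw [h1, q2, q3 t h2] at he
            exact absurd he.symm (hnF (t - (n-i) - 1) (by omega))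
          · rw [q3 s h1, q1 t h2] at he
            have := hinj (s - (n-i) - 1) (by omega) (i+1+t) (by omega) he
            omega
          · rw [q3 s h1, h2, q2] at he
            exact absurd he (hnF (s - (n-i) - 1) (by omega))
          · rw [q3 s h1, q3 t h2] at he
            have := hinj (s - (n-i) - 1) (by omega) (t - (n-i) - 1) (by omega) he
            omega
        have hQI : ∀ t ∈ T, G₁ ∩ G₂ ⊆ Qf t := by
          intro t ht
          have htn := (hTmem t ht).1
          rcases lt_trichotomy t (n - i) with h | h | h
          · rw [q1 t h]; exact hIsub (i+1+t) (by omega)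
          · rw [h, q2]; exact hIF
          · rw [q3 t h]; exact hIsub (t - (n-i) - 1) (by omega)
        have hQgap : ∀ s ∈ T, ∀ t ∈ T, s + 2 ≤ t → Qf s ∩ Qf t ⊆ G₁ ∩ G₂ := by
          intro s hs t ht hst
          have hsn := (hTmem s hs).1
          have htn := (hTmem t ht).1
          rcases lt_trichotomy t (n - i) with h2 | h2 | h2
          · rw [q1 s (by omega), q1 t h2]
            exact hINT2 (i+1+s) (i+1+t) (by omega) (by omega)
          · rw [q1 s (by omega), h2, q2]
            rw [(hint (i+1+s) (by omega) (by omega)).2]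
          · rcases lt_trichotomy s (n - i) with h1 | h1 | h1
            · rw [q1 s h1, q3 t h2, Finset.inter_comm]
              exact hINT2 (t - (n-i) - 1) (i+1+s) (by omega) (by omega)
            · rw [h1, q2, q3 t h2, Finset.inter_comm]
              rw [(hint (t - (n-i) - 1) (by omega) (by omega)).2]
            · rw [q3 s h1, q3 t h2]
              exact hINT2 (s - (n-i) - 1) (t - (n-i) - 1) (by omega) (by omega)
        have hTne : T.Nonempty := by
          obtain ⟨A, hA⟩ := hne
          obtain ⟨t, ht, he⟩ := hQcov A hA
          exact ⟨t, Finset.mem_filter.2 ⟨Finset.mem_range.2 (by omega), by rw [he]; exact hA⟩⟩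
        obtain ⟨L, hLleaf⟩ := order_leaf T hTne Qf (G₁ ∩ G₂) hQinj hQI hQgap
        rw [← hΓT] at hLleaf
        exact ⟨L, hLleaf⟩
      · set T := (Finset.range (n+1)).filter (fun t => f t ∈ Γ) with hTdef
        have hTmem : ∀ t ∈ T, t ≤ n ∧ f t ∈ Γ := by
          intro t ht
          have h := Finset.mem_filter.1 ht
          exact ⟨by have := Finset.mem_range.1 h.1; omega, h.2⟩
        have hΓT : Γ = T.image f := by
          apply Finset.Subset.antisymm
          · intro A hA
            have hAΔ' : A ∈ D := hss.1 hA
            rcases Finset.mem_insert.1 hAΔ' with h | h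
            · exact absurd (h ▸ hA) hFΓ
            · obtain ⟨k, hkr, he⟩ := Finset.mem_image.1 h
              exact Finset.mem_image.2 ⟨k, Finset.mem_filter.2
                ⟨hkr, by rw [he]; exact hA⟩, he⟩
          · intro A hA
            obtain ⟨t, ht, he⟩ := Finset.mem_image.1 hA
            rw [← he]
            exact (Finset.mem_filter.1 ht).2
        have hTne : T.Nonempty := by
          obtain ⟨A, hA⟩ := hne
          have : A ∈ T.image f := by rw [← hΓT]; exact hA
          obtain ⟨t, ht, _⟩ := Finset.mem_image.1 this
          exact ⟨t, ht⟩
        obtain ⟨L, hLleaf⟩ := order_leaf T hTne f (G₁ ∩ G₂)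
          (fun s hs t ht he => hinj s (hTmem s hs).1 t (hTmem t ht).1 he)
          (fun t ht => hIsub t (hTmem t ht).1)
          (fun s hs t ht hst => hINT2 s t hst (hTmem t ht).1)
        rw [← hΓT] at hLleaf
        exact ⟨L, hLleaf⟩
  exact ⟨D, hsubΔ, ⟨⟨F, hFD⟩, hnoleaf, hminD⟩, hFD, hG₁D, hG₂D, snn₁, snn₂⟩
end TCAux

theorem triple_condition_iff_cycle (Δ : Finset (Finset V))
    (hΔ : IsFacetComplex Δ) (F G₁ G₂ : Finset V)
    (hF : F ∈ Δ) (hG₁ : G₁ ∈ Δ) (hG₂ : G₂ ∈ Δ)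
    (h1 : F ≠ G₁) (h2 : F ≠ G₂) (h3 : G₁ ≠ G₂) :
    TripleCondition Δ F G₁ G₂ ↔
      ∃ Δ' ⊆ Δ, IsCycle Δ' ∧ F ∈ Δ' ∧ G₁ ∈ Δ' ∧ G₂ ∈ Δ' ∧
        StrongNeighbor Δ' F G₁ ∧ StrongNeighbor Δ' F G₂ := by
  constructor
  · intro htc
    exact TCAux.forward hΔ hF hG₁ hG₂ h1 h2 h3 htc
  · rintro ⟨D, hsub, hcyc, hFD, hG₁D, hG₂D, sn₁, sn₂⟩
    exact TCAux.backward h3 hsub hcyc hFD hG₁D hG₂D sn₁ sn₂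
end

section
/- Let Δ be a connected facet complex. Then Δ is a tree if and only if no triple of facets of Δ satisfies the triple condition. -/
variable {V : Type*} [DecidableEq V]

/-! ### Auxiliary machinery -/

section Aux

lemma isLeaf_of_joint {Θ : Finset (Finset V)} {A G : Finset V} (hA : A ∈ Θ)
    (hG : G ∈ Θ.erase A) (h : ∀ H ∈ Θ.erase A, H ∩ A ⊆ G ∩ A) : IsLeaf Θ A :=
  ⟨hA, Or.inr ⟨G, hG, h⟩⟩

lemma joint_of_isLeaf {Θ : Finset (Finset V)} {A : Finset V} (h : IsLeaf Θ A)
    (hc : 2 ≤ Θ.card) : ∃ G ∈ Θ.erase A, ∀ H ∈ Θ.erase A, H ∩ A ⊆ G ∩ A := by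
  rcases h.2 with h1 | h2
  · exfalso; rw [h1] at hc; simp at hc
  · exact h2

/-- `Θ` is a forest (local predicate). -/
def Forest (Θ : Finset (Finset V)) : Prop := ∀ S ⊆ Θ, S.Nonempty → ∃ F, IsLeaf S F

/-- Every forest with at least two facets has a leaf avoiding any prescribed facet. -/
lemma forest_two_leaves :
    ∀ Θ : Finset (Finset V), Forest Θ → 2 ≤ Θ.card → ∀ F ∈ Θ,
      ∃ M, IsLeaf Θ M ∧ M ≠ F := by
  intro Θ
  induction Θ using Finset.strongInduction with
  | _ Θ IH =>
    intro hf hc F hF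
    obtain ⟨M₀, hM₀⟩ := hf Θ Finset.Subset.rfl (Finset.card_pos.1 (by omega))
    by_cases hMF : M₀ = F
    · rw [hMF] at hM₀
      obtain ⟨J, hJ, hdomF⟩ := joint_of_isLeaf hM₀ hc
      set Θ' := Θ.erase F with hΘ'
      have hss : Θ' ⊂ Θ := Finset.erase_ssubset hF
      have hf' : Forest Θ' := fun S hS hne => hf S (hS.trans (Finset.erase_subset _ _)) hne
      have hcard' : Θ'.card = Θ.card - 1 := Finset.card_erase_of_mem hF
      by_cases hc2 : 2 ≤ Θ'.card
      · obtain ⟨M, hM, hMJ⟩ := IH Θ' hss hf' hc2 J hJ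
        obtain ⟨K, hK, hdomM⟩ := joint_of_isLeaf hM hc2
        have hMΘ : M ∈ Θ := Finset.mem_of_mem_erase hM.1
        have hMF' : M ≠ F := (Finset.mem_erase.1 hM.1).1
        refine ⟨M, isLeaf_of_joint (G := K) hMΘ ?_ ?_, hMF'⟩
        · exact Finset.mem_erase.2 ⟨(Finset.mem_erase.1 hK).1,
            Finset.mem_of_mem_erase (Finset.mem_of_mem_erase hK)⟩
        · intro H hH
          by_cases hHF : H = F
          · subst hHF
            have h1 : M ∩ H ⊆ J ∩ H := hdomF M (Finset.mem_erase.2 ⟨hMF', hMΘ⟩)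
            have h2 : J ∩ M ⊆ K ∩ M := hdomM J (Finset.mem_erase.2 ⟨Ne.symm hMJ, hJ⟩)
            intro x hx
            have hxM : x ∈ M := (Finset.mem_inter.1 hx).2
            have hxH : x ∈ H := (Finset.mem_inter.1 hx).1
            have : x ∈ J := (Finset.mem_inter.1 (h1 (Finset.mem_inter.2 ⟨hxM, hxH⟩))).1
            exact h2 (Finset.mem_inter.2 ⟨this, hxM⟩)
          · refine hdomM H (Finset.mem_erase.2 ⟨(Finset.mem_erase.1 hH).1,
              Finset.mem_erase.2 ⟨hHF, Finset.mem_of_mem_erase hH⟩⟩)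
      · -- Θ' is a singleton
        have hc1 : Θ'.card = 1 := by omega
        obtain ⟨N, hN⟩ := Finset.card_eq_one.1 hc1
        have hNΘ' : N ∈ Θ' := by rw [hN]; exact Finset.mem_singleton_self N
        have hNF : N ≠ F := (Finset.mem_erase.1 hNΘ').1
        have hNΘ : N ∈ Θ := Finset.mem_of_mem_erase hNΘ'
        refine ⟨N, isLeaf_of_joint hNΘ (Finset.mem_erase.2 ⟨Ne.symm hNF, hF⟩) ?_, hNF⟩
        intro H hH
        have hHΘ : H ∈ Θ := Finset.mem_of_mem_erase hH
        have hHN : H ≠ N := (Finset.mem_erase.1 hH).1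
        have : H = F := by
          by_contra hne
          have : H ∈ Θ' := Finset.mem_erase.2 ⟨hne, hHΘ⟩
          rw [hN] at this
          exact hHN (Finset.mem_singleton.1 this)
        subst this
        exact Finset.Subset.rfl
    · exact ⟨M₀, hM₀, hMF⟩

/-- If `a` is related to `b ≠ a` by a refl-trans chain, there is a first step leaving `a`. -/
lemma exists_first {α : Type*} {r : α → α → Prop} {a b : α}
    (h : Relation.ReflTransGen r a b) (hab : a ≠ b) : ∃ c, c ≠ a ∧ r a c := by
  refine Relation.ReflTransGen.head_induction_on
    (motive := fun x _ => x ≠ b → ∃ c, c ≠ x ∧ r x c) h (fun hb => absurd rfl hb) ?_ hab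
  intro x c hxc hcb ih hxb
  by_cases hcx : c = x
  · rw [hcx] at ih
    exact ih hxb
  · exact ⟨c, hcx, hxc⟩

end Aux

/-! ### Forward direction : a forest admits no triple condition -/

section Forward

lemma forest_no_tc (Δ : Finset (Finset V)) (hΔ : IsFacetComplex Δ) (hforest : IsForest Δ) :
    ¬ ∃ F G₁ G₂ : Finset V, F ∈ Δ ∧ G₁ ∈ Δ ∧ G₂ ∈ Δ ∧
      F ≠ G₁ ∧ F ≠ G₂ ∧ G₁ ≠ G₂ ∧ TripleCondition Δ F G₁ G₂ := by
  classical
  rintro ⟨F, G₁, G₂, hF, hG₁, hG₂, hFG₁, hFG₂, hG₁G₂, ht1, ht2, hG₁r, hG₂r, hchain⟩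
  set Ω := residue Δ F G₁ G₂ with hΩdef
  have hΩΔ : Ω ⊆ Δ := by
    rw [hΩdef, residue]
    refine Finset.union_subset (Finset.filter_subset _ _) ?_
    intro x hx
    rcases Finset.mem_insert.1 hx with rfl | hx
    · exact hG₁
    · rw [Finset.mem_singleton.1 hx]; exact hG₂
  have hFΩ : F ∉ Ω := by
    intro h
    rcases Finset.mem_union.1 h with h | h
    · have h2 := (Finset.mem_filter.1 h).2
      rw [Finset.inter_self] at h2
      have : F ⊆ G₁ := by rw [h2]; exact Finset.inter_subset_left
      exact hFG₁ (hΔ F hF G₁ hG₁ this)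
    · rcases Finset.mem_insert.1 h with h | h
      · exact hFG₁ h
      · exact hFG₂ (Finset.mem_singleton.1 h)
  -- the edge relation outside F on Ω
  set e : Finset V → Finset V → Prop :=
    fun A B => A ∈ Ω ∧ B ∈ Ω ∧ ((A ∩ B) \ F).Nonempty with hedef
  -- property of a "good" connecting set
  set Q : Finset (Finset V) → Prop := fun C => G₁ ∈ C ∧ G₂ ∈ C ∧
    ∀ A ∈ C, Relation.ReflTransGen
      (fun A B => A ∈ C ∧ B ∈ C ∧ ((A ∩ B) \ F).Nonempty) G₁ A with hQdef
  -- the reachable set satisfies Q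
  have hrestrict : ∀ A, Relation.ReflTransGen e G₁ A →
      Relation.ReflTransGen (fun X Y => (X ∈ Ω ∧ Relation.ReflTransGen e G₁ X) ∧
        (Y ∈ Ω ∧ Relation.ReflTransGen e G₁ Y) ∧ ((X ∩ Y) \ F).Nonempty) G₁ A := by
    intro A h
    induction h with
    | refl => exact Relation.ReflTransGen.refl
    | @tail b c hgb hbc ih =>
      exact ih.tail ⟨⟨hbc.1, hgb⟩,
        ⟨hbc.2.1, Relation.ReflTransGen.tail hgb hbc⟩, hbc.2.2⟩
  have hQC₀ : Q (Ω.filter (fun A => Relation.ReflTransGen e G₁ A)) := by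
    have hG₁Ω : G₁ ∈ Ω := hG₁r
    have hG₂Ω : G₂ ∈ Ω := hG₂r
    refine ⟨Finset.mem_filter.2 ⟨hG₁Ω, Relation.ReflTransGen.refl⟩,
      Finset.mem_filter.2 ⟨hG₂Ω, hchain⟩, ?_⟩
    intro A hA
    have h := hrestrict A (Finset.mem_filter.1 hA).2
    refine Relation.ReflTransGen.mono ?_ _ _ h
    intro X Y hXY
    exact ⟨Finset.mem_filter.2 hXY.1, Finset.mem_filter.2 hXY.2.1, hXY.2.2⟩
  -- pick a minimal good connecting set
  obtain ⟨C, hC𝒮, hCmin⟩ := Finset.exists_min_image (Ω.powerset.filter Q) Finset.card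
    ⟨Ω.filter (fun A => Relation.ReflTransGen e G₁ A),
      Finset.mem_filter.2 ⟨Finset.mem_powerset.2 (Finset.filter_subset _ _), hQC₀⟩⟩
  have hCΩ : C ⊆ Ω := Finset.mem_powerset.1 (Finset.mem_filter.1 hC𝒮).1
  obtain ⟨hG₁C, hG₂C, hreach⟩ := (Finset.mem_filter.1 hC𝒮).2
  set eC : Finset V → Finset V → Prop :=
    fun A B => A ∈ C ∧ B ∈ C ∧ ((A ∩ B) \ F).Nonempty with heC
  have heCsymm : Symmetric eC := by
    intro A B h
    exact ⟨h.2.1, h.1, by rw [Finset.inter_comm]; exact h.2.2⟩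
  have hFC : F ∉ C := fun h => hFΩ (hCΩ h)
  set S := insert F C with hSdef
  have hSΔ : S ⊆ Δ := Finset.insert_subset hF (hCΩ.trans hΩΔ)
  obtain ⟨M, hMleaf⟩ := hforest S hSΔ ⟨F, Finset.mem_insert_self _ _⟩
  have hcard2 : 2 ≤ S.card := by
    rw [Nat.succ_le_iff]
    exact Finset.one_lt_card.2 ⟨F, Finset.mem_insert_self _ _, G₁,
      Finset.mem_insert_of_mem hG₁C, hFG₁⟩
  obtain ⟨G, hG, hdom⟩ := joint_of_isLeaf hMleaf hcard2
  have hMS : M ∈ S := hMleaf.1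
  -- helper: an element of C which is neither G₁ nor G₂ lies in the filter part
  have hint : ∀ A ∈ C, A ≠ G₁ → A ≠ G₂ → A ∩ F = G₁ ∩ G₂ := by
    intro A hA h1 h2
    rcases Finset.mem_union.1 (hCΩ hA) with h | h
    · exact (Finset.mem_filter.1 h).2
    · rcases Finset.mem_insert.1 h with h | h
      · exact absurd h h1
      · exact absurd (Finset.mem_singleton.1 h) h2
  by_cases hMF : M = F
  · -- F cannot be a leaf of S
    rw [hMF] at hG hdom
    have hGC : G ∈ C := by
      have := hG
      rw [hSdef, Finset.erase_insert hFC] at this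
      exact this
    by_cases hGG₁ : G = G₁
    · refine ht2 ?_
      have := hdom G₂ (Finset.mem_erase.2 ⟨Ne.symm hFG₂, Finset.mem_insert_of_mem hG₂C⟩)
      rwa [hGG₁] at this
    by_cases hGG₂ : G = G₂
    · refine ht1 ?_
      have := hdom G₁ (Finset.mem_erase.2 ⟨Ne.symm hFG₁, Finset.mem_insert_of_mem hG₁C⟩)
      rwa [hGG₂] at this
    · have hGF : G ∩ F = G₁ ∩ G₂ := hint G hGC hGG₁ hGG₂
      refine ht1 ?_
      have h1 := hdom G₁ (Finset.mem_erase.2 ⟨Ne.symm hFG₁, Finset.mem_insert_of_mem hG₁C⟩)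
      intro x hx
      have hxG : x ∈ G := (Finset.mem_inter.1 (h1 hx)).1
      have hxF : x ∈ F := (Finset.mem_inter.1 hx).2
      have : x ∈ G₁ ∩ G₂ := by rw [← hGF]; exact Finset.mem_inter.2 ⟨hxG, hxF⟩
      exact Finset.mem_inter.2 ⟨(Finset.mem_inter.1 this).2, hxF⟩
  · have hMC : M ∈ C := by
      rcases Finset.mem_insert.1 hMS with h | h
      · exact absurd h hMF
      · exact h
    have hGS : G ∈ S := Finset.mem_of_mem_erase hG
    have hGM : G ≠ M := (Finset.mem_erase.1 hG).1
    by_cases hMG₁ : M = G₁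
    · -- G₁ cannot be a leaf of S
      rw [hMG₁] at hdom hGM
      obtain ⟨N, hNG₁, hrelN⟩ := exists_first (hreach G₂ hG₂C) hG₁G₂
      have hNC : N ∈ C := hrelN.2.1
      obtain ⟨u, hu⟩ := hrelN.2.2
      have huG₁N : u ∈ G₁ ∩ N := (Finset.mem_sdiff.1 hu).1
      have huF : u ∉ F := (Finset.mem_sdiff.1 hu).2
      by_cases hGF' : G = F
      · have := hdom N (Finset.mem_erase.2 ⟨hNG₁, Finset.mem_insert_of_mem hNC⟩)
        have : u ∈ F := by
          have hu2 : u ∈ N ∩ G₁ := by rw [Finset.inter_comm]; exact huG₁N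
          rw [hGF'] at this
          exact (Finset.mem_inter.1 (this hu2)).1
        exact huF this
      · have hGC2 : G ∈ C := by
          rcases Finset.mem_insert.1 hGS with h | h
          · exact absurd h hGF'
          · exact h
        have hFdom := hdom F (Finset.mem_erase.2 ⟨hFG₁, Finset.mem_insert_self _ _⟩)
        by_cases hGG₂ : G = G₂
        · refine ht1 ?_
          intro x hx
          have hx' : x ∈ F ∩ G₁ := by rw [Finset.inter_comm]; exact hx
          have : x ∈ G ∩ G₁ := hFdom hx'
          rw [hGG₂] at this
          exact Finset.mem_inter.2 ⟨(Finset.mem_inter.1 this).1, (Finset.mem_inter.1 hx).2⟩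
        · have hGG₁' : G ≠ G₁ := hGM
          have hGF : G ∩ F = G₁ ∩ G₂ := hint G hGC2 hGG₁' hGG₂
          refine ht1 ?_
          intro x hx
          have hx' : x ∈ F ∩ G₁ := by rw [Finset.inter_comm]; exact hx
          have hxG : x ∈ G := (Finset.mem_inter.1 (hFdom hx')).1
          have hxF : x ∈ F := (Finset.mem_inter.1 hx).2
          have : x ∈ G₁ ∩ G₂ := by rw [← hGF]; exact Finset.mem_inter.2 ⟨hxG, hxF⟩
          exact Finset.mem_inter.2 ⟨(Finset.mem_inter.1 this).2, hxF⟩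
    by_cases hMG₂ : M = G₂
    · -- G₂ cannot be a leaf of S
      rw [hMG₂] at hdom hGM
      have hchainrev : Relation.ReflTransGen eC G₂ G₁ :=
        Relation.ReflTransGen.mono (fun _ _ h => heCsymm h) _ _
          (Relation.ReflTransGen.swap _ _ (hreach G₂ hG₂C))
      obtain ⟨N, hNG₂, hrelN⟩ := exists_first hchainrev (Ne.symm hG₁G₂)
      have hNC : N ∈ C := hrelN.2.1
      obtain ⟨u, hu⟩ := hrelN.2.2
      have huG₂N : u ∈ G₂ ∩ N := (Finset.mem_sdiff.1 hu).1
      have huF : u ∉ F := (Finset.mem_sdiff.1 hu).2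
      by_cases hGF' : G = F
      · have := hdom N (Finset.mem_erase.2 ⟨hNG₂, Finset.mem_insert_of_mem hNC⟩)
        have : u ∈ F := by
          have hu2 : u ∈ N ∩ G₂ := by rw [Finset.inter_comm]; exact huG₂N
          rw [hGF'] at this
          exact (Finset.mem_inter.1 (this hu2)).1
        exact huF this
      · have hGC2 : G ∈ C := by
          rcases Finset.mem_insert.1 hGS with h | h
          · exact absurd h hGF'
          · exact h
        have hFdom := hdom F (Finset.mem_erase.2 ⟨hFG₂, Finset.mem_insert_self _ _⟩)
        by_cases hGG₁ : G = G₁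
        · refine ht2 ?_
          intro x hx
          have hx' : x ∈ F ∩ G₂ := by rw [Finset.inter_comm]; exact hx
          have : x ∈ G ∩ G₂ := hFdom hx'
          rw [hGG₁] at this
          exact Finset.mem_inter.2 ⟨(Finset.mem_inter.1 this).1, (Finset.mem_inter.1 hx).2⟩
        · have hGG₂' : G ≠ G₂ := hGM
          have hGF : G ∩ F = G₁ ∩ G₂ := hint G hGC2 hGG₁ hGG₂'
          refine ht2 ?_
          intro x hx
          have hx' : x ∈ F ∩ G₂ := by rw [Finset.inter_comm]; exact hx
          have hxG : x ∈ G := (Finset.mem_inter.1 (hFdom hx')).1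
          have hxF : x ∈ F := (Finset.mem_inter.1 hx).2
          have : x ∈ G₁ ∩ G₂ := by rw [← hGF]; exact Finset.mem_inter.2 ⟨hxG, hxF⟩
          exact Finset.mem_inter.2 ⟨(Finset.mem_inter.1 this).1, hxF⟩
    · -- an interior facet of the minimal connecting set cannot be a leaf of S
      have hGF' : G ≠ F := by
        intro hGF'
        have hchainM : Relation.ReflTransGen eC M G₁ :=
          Relation.ReflTransGen.mono (fun _ _ h => heCsymm h) _ _
            (Relation.ReflTransGen.swap _ _ (hreach M hMC))
        obtain ⟨N, hNM, hrelN⟩ := exists_first hchainM (fun h => hMG₁ h)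
        have hNC : N ∈ C := hrelN.2.1
        obtain ⟨u, hu⟩ := hrelN.2.2
        have huMN : u ∈ M ∩ N := (Finset.mem_sdiff.1 hu).1
        have huF : u ∉ F := (Finset.mem_sdiff.1 hu).2
        have := hdom N (Finset.mem_erase.2 ⟨hNM, Finset.mem_insert_of_mem hNC⟩)
        rw [hGF'] at this
        refine huF ?_
        have hu2 : u ∈ N ∩ M := by rw [Finset.inter_comm]; exact huMN
        exact (Finset.mem_inter.1 (this hu2)).1
      have hGC2 : G ∈ C := by
        rcases Finset.mem_insert.1 hGS with h | h
        · exact absurd h hGF'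
        · exact h
      -- replace M by G : C.erase M still satisfies Q, contradicting minimality
      have hQerase : Q (C.erase M) := by
        have hσ : ∀ A, Relation.ReflTransGen eC G₁ A →
            Relation.ReflTransGen
              (fun X Y => X ∈ C.erase M ∧ Y ∈ C.erase M ∧ ((X ∩ Y) \ F).Nonempty)
              G₁ (if A = M then G else A) := by
          intro A h
          induction h with
          | refl => rw [if_neg (Ne.symm hMG₁)]
          | @tail b c hgb hbc ih =>
            by_cases hbc' : (if b = M then G else b) = (if c = M then G else c)
            · rwa [hbc'] at ih
            · refine ih.tail ?_
              have hbC : b ∈ C := hbc.1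
              have hcC : c ∈ C := hbc.2.1
              obtain ⟨u, hu⟩ := hbc.2.2
              have huI : u ∈ b ∩ c := (Finset.mem_sdiff.1 hu).1
              have huF2 : u ∉ F := (Finset.mem_sdiff.1 hu).2
              by_cases hbM : b = M <;> by_cases hcM : c = M
              · rw [hbM, hcM] at hbc'; simp at hbc'
              · rw [if_pos hbM, if_neg hcM]
                refine ⟨Finset.mem_erase.2 ⟨hGM, hGC2⟩, Finset.mem_erase.2 ⟨hcM, hcC⟩, ?_⟩
                have hcdom := hdom c (Finset.mem_erase.2 ⟨hcM, Finset.mem_insert_of_mem hcC⟩)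
                have huG : u ∈ G := by
                  have : u ∈ c ∩ M := by
                    rw [Finset.inter_comm, ← hbM]
                    exact huI
                  exact (Finset.mem_inter.1 (hcdom this)).1
                exact ⟨u, Finset.mem_sdiff.2 ⟨Finset.mem_inter.2
                  ⟨huG, (Finset.mem_inter.1 huI).2⟩, huF2⟩⟩
              · rw [if_neg hbM, if_pos hcM]
                refine ⟨Finset.mem_erase.2 ⟨hbM, hbC⟩, Finset.mem_erase.2 ⟨hGM, hGC2⟩, ?_⟩
                have hbdom := hdom b (Finset.mem_erase.2 ⟨hbM, Finset.mem_insert_of_mem hbC⟩)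
                have huG : u ∈ G := by
                  have : u ∈ b ∩ M := by rw [← hcM]; exact huI
                  exact (Finset.mem_inter.1 (hbdom this)).1
                exact ⟨u, Finset.mem_sdiff.2 ⟨Finset.mem_inter.2
                  ⟨(Finset.mem_inter.1 huI).1, huG⟩, huF2⟩⟩
              · rw [if_neg hbM, if_neg hcM]
                exact ⟨Finset.mem_erase.2 ⟨hbM, hbC⟩, Finset.mem_erase.2 ⟨hcM, hcC⟩, hbc.2.2⟩
        refine ⟨Finset.mem_erase.2 ⟨Ne.symm hMG₁, hG₁C⟩,
          Finset.mem_erase.2 ⟨Ne.symm hMG₂, hG₂C⟩, ?_⟩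
        intro A hA
        have hAM : A ≠ M := (Finset.mem_erase.1 hA).1
        have := hσ A (hreach A (Finset.mem_of_mem_erase hA))
        rwa [if_neg hAM] at this
      have hmem : C.erase M ∈ Ω.powerset.filter Q :=
        Finset.mem_filter.2 ⟨Finset.mem_powerset.2 ((Finset.erase_subset _ _).trans hCΩ), hQerase⟩
      have := hCmin _ hmem
      have hlt := Finset.card_erase_lt_of_mem hMC
      omega

end Forward

/-! ### Cycle machinery -/

section Cycle

variable {Γ : Finset (Finset V)}

/-- `A` is a leaf of `Γ \ {B}` with joint `C` (flattened form). -/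
def CRel (Γ : Finset (Finset V)) (A B C : Finset V) : Prop :=
  A ∈ Γ ∧ B ∈ Γ ∧ C ∈ Γ ∧ A ≠ B ∧ C ≠ A ∧ C ≠ B ∧
    ∀ H ∈ Γ, H ≠ A → H ≠ B → H ∩ A ⊆ C ∩ A

lemma card_ge_three (hne : Γ.Nonempty) (hll : ∀ F, ¬ IsLeaf Γ F) : 3 ≤ Γ.card := by
  by_contra hc
  push_neg at hc
  have h1 : 1 ≤ Γ.card := Finset.card_pos.2 hne
  have hcases : Γ.card = 1 ∨ Γ.card = 2 := by omega
  rcases hcases with h | h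
  · obtain ⟨a, ha⟩ := Finset.card_eq_one.1 h
    exact hll a ⟨by rw [ha]; exact Finset.mem_singleton_self a, Or.inl (by rw [ha])⟩
  · obtain ⟨a, b, hab, hΓ⟩ := Finset.card_eq_two.1 h
    have hbΓ : b ∈ Γ := by rw [hΓ]; simp
    have haΓ : a ∈ Γ := by rw [hΓ]; simp
    refine hll b ⟨hbΓ, Or.inr ⟨a, Finset.mem_erase.2 ⟨hab, haΓ⟩, ?_⟩⟩
    intro H hH
    have : H = a := by
      have hHΓ : H ∈ Γ := Finset.mem_of_mem_erase hH
      have hHb : H ≠ b := (Finset.mem_erase.1 hH).1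
      rw [hΓ] at hHΓ
      rcases Finset.mem_insert.1 hHΓ with h' | h'
      · exact h'
      · exact absurd (Finset.mem_singleton.1 h') hHb
    rw [this]

lemma forest_of_ssubset (hmin : ∀ S ⊂ Γ, S.Nonempty → ∃ F, IsLeaf S F)
    {S : Finset (Finset V)} (h : S ⊂ Γ) : Forest S :=
  fun T hT hTne => hmin T (lt_of_le_of_lt (Finset.le_iff_subset.2 hT) h) hTne

lemma exists_rel (hll : ∀ F, ¬ IsLeaf Γ F) (hmin : ∀ S ⊂ Γ, S.Nonempty → ∃ F, IsLeaf S F)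
    (hn3 : 3 ≤ Γ.card) {B : Finset V} (hB : B ∈ Γ) : ∃ A C, CRel Γ A B C := by
  have hss : Γ.erase B ⊂ Γ := Finset.erase_ssubset hB
  have hcard : 2 ≤ (Γ.erase B).card := by
    rw [Finset.card_erase_of_mem hB]; omega
  obtain ⟨A, hA⟩ := hmin _ hss (Finset.card_pos.1 (by omega))
  obtain ⟨C, hC, hdom⟩ := joint_of_isLeaf hA hcard
  have hAe : A ∈ Γ.erase B := hA.1
  refine ⟨A, C, Finset.mem_of_mem_erase hAe, hB,
    Finset.mem_of_mem_erase (Finset.mem_of_mem_erase hC),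
    (Finset.mem_erase.1 hAe).1, (Finset.mem_erase.1 hC).1,
    (Finset.mem_erase.1 (Finset.mem_of_mem_erase hC)).1, ?_⟩
  intro H hH hHA hHB
  exact hdom H (Finset.mem_erase.2 ⟨hHA, Finset.mem_erase.2 ⟨hHB, hH⟩⟩)

lemma rel_not2 (hll : ∀ F, ¬ IsLeaf Γ F) {A B C : Finset V} (h : CRel Γ A B C) :
    ¬ B ∩ A ⊆ C ∩ A := by
  intro hsub
  obtain ⟨hAΓ, hBΓ, hCΓ, hAB, hCA, hCB, hdom⟩ := h
  refine hll A (isLeaf_of_joint hAΓ (Finset.mem_erase.2 ⟨hCA, hCΓ⟩) ?_)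
  intro H hH
  have hHΓ : H ∈ Γ := Finset.mem_of_mem_erase hH
  have hHA : H ≠ A := (Finset.mem_erase.1 hH).1
  by_cases hHB : H = B
  · rw [hHB]; exact hsub
  · exact hdom H hHΓ hHA hHB

lemma rel_not3 (hll : ∀ F, ¬ IsLeaf Γ F) {A B C : Finset V} (h : CRel Γ A B C) :
    ¬ C ∩ A ⊆ B ∩ A := by
  intro hsub
  obtain ⟨hAΓ, hBΓ, hCΓ, hAB, hCA, hCB, hdom⟩ := h
  refine hll A (isLeaf_of_joint hAΓ (Finset.mem_erase.2 ⟨Ne.symm hAB, hBΓ⟩) ?_)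
  intro H hH
  have hHΓ : H ∈ Γ := Finset.mem_of_mem_erase hH
  have hHA : H ≠ A := (Finset.mem_erase.1 hH).1
  by_cases hHB : H = B
  · rw [hHB]
  · exact (hdom H hHΓ hHA hHB).trans hsub

lemma rel_nbr (hll : ∀ F, ¬ IsLeaf Γ F) {A B C M K : Finset V}
    (h1 : CRel Γ A B C) (h2 : CRel Γ M A K) : M = B ∨ M = C := by
  by_contra hcon
  push_neg at hcon
  obtain ⟨hMB, hMC⟩ := hcon
  obtain ⟨u, hu1, hu2⟩ := Finset.not_subset.1 (rel_not2 hll h2)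
  -- u ∈ A ∩ M, u ∉ K ∩ M
  have huM : u ∈ M := (Finset.mem_inter.1 hu1).2
  have huA : u ∈ A := (Finset.mem_inter.1 hu1).1
  have hdom1 := h1.2.2.2.2.2.2 M h2.1 h2.2.2.2.1 hMB
  have huC : u ∈ C := (Finset.mem_inter.1 (hdom1 (Finset.mem_inter.2 ⟨huM, huA⟩))).1
  have hdom2 := h2.2.2.2.2.2.2 C h1.2.2.1 (Ne.symm hMC) h1.2.2.2.2.1
  exact hu2 (hdom2 (Finset.mem_inter.2 ⟨huC, huM⟩))

lemma rel_step (hll : ∀ F, ¬ IsLeaf Γ F) (hmin : ∀ S ⊂ Γ, S.Nonempty → ∃ F, IsLeaf S F)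
    (hn3 : 3 ≤ Γ.card) {A B C : Finset V} (h : CRel Γ A B C) : ∃ D, CRel Γ C A D := by
  have hAΓ : A ∈ Γ := h.1
  have hss : Γ.erase A ⊂ Γ := Finset.erase_ssubset hAΓ
  have hcard : 2 ≤ (Γ.erase A).card := by
    rw [Finset.card_erase_of_mem hAΓ]; omega
  have hBe : B ∈ Γ.erase A := Finset.mem_erase.2 ⟨Ne.symm h.2.2.2.1, h.2.1⟩
  obtain ⟨M, hM, hMB⟩ := forest_two_leaves _ (forest_of_ssubset hmin hss) hcard B hBe
  obtain ⟨K, hK, hdom⟩ := joint_of_isLeaf hM hcard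
  have hMe : M ∈ Γ.erase A := hM.1
  have hrelM : CRel Γ M A K :=
    ⟨Finset.mem_of_mem_erase hMe, hAΓ,
      Finset.mem_of_mem_erase (Finset.mem_of_mem_erase hK),
      (Finset.mem_erase.1 hMe).1, (Finset.mem_erase.1 hK).1,
      (Finset.mem_erase.1 (Finset.mem_of_mem_erase hK)).1,
      fun H hH hHM hHA => hdom H (Finset.mem_erase.2 ⟨hHM, Finset.mem_erase.2 ⟨hHA, hH⟩⟩)⟩
  rcases rel_nbr hll h hrelM with h' | h'
  · exact absurd h' hMB
  · rw [h'] at hrelM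
    exact ⟨K, hrelM⟩

lemma rel_rev (hll : ∀ F, ¬ IsLeaf Γ F) (hmin : ∀ S ⊂ Γ, S.Nonempty → ∃ F, IsLeaf S F)
    (hn3 : 3 ≤ Γ.card) {A B C : Finset V} (h : CRel Γ A B C) : CRel Γ A C B := by
  obtain ⟨D, hCAD⟩ := rel_step hll hmin hn3 h
  -- A is a leaf of Γ \ {C} : take a leaf of Γ.erase C avoiding D
  have hCΓ : C ∈ Γ := h.2.2.1
  have hssC : Γ.erase C ⊂ Γ := Finset.erase_ssubset hCΓ
  have hcardC : 2 ≤ (Γ.erase C).card := by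
    rw [Finset.card_erase_of_mem hCΓ]; omega
  have hDe : D ∈ Γ.erase C := Finset.mem_erase.2 ⟨hCAD.2.2.2.2.1, hCAD.2.2.1⟩
  obtain ⟨M, hM, hMD⟩ := forest_two_leaves _ (forest_of_ssubset hmin hssC) hcardC D hDe
  obtain ⟨K, hK, hdomK⟩ := joint_of_isLeaf hM hcardC
  have hMe : M ∈ Γ.erase C := hM.1
  have hrelM : CRel Γ M C K :=
    ⟨Finset.mem_of_mem_erase hMe, hCΓ,
      Finset.mem_of_mem_erase (Finset.mem_of_mem_erase hK),
      (Finset.mem_erase.1 hMe).1, (Finset.mem_erase.1 hK).1,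
      (Finset.mem_erase.1 (Finset.mem_of_mem_erase hK)).1,
      fun H hH hHM hHC => hdomK H (Finset.mem_erase.2 ⟨hHM, Finset.mem_erase.2 ⟨hHC, hH⟩⟩)⟩
  have hMA : M = A := by
    rcases rel_nbr hll hCAD hrelM with h' | h'
    · exact h'
    · exact absurd h' hMD
  rw [hMA] at hrelM
  -- identify K with B : B is also a leaf of Γ.erase A
  have hAΓ : A ∈ Γ := h.1
  have hssA : Γ.erase A ⊂ Γ := Finset.erase_ssubset hAΓ
  have hcardA : 2 ≤ (Γ.erase A).card := by
    rw [Finset.card_erase_of_mem hAΓ]; omega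
  have hCe : C ∈ Γ.erase A := Finset.mem_erase.2 ⟨h.2.2.2.2.1, hCΓ⟩
  obtain ⟨M', hM', hM'C⟩ := forest_two_leaves _ (forest_of_ssubset hmin hssA) hcardA C hCe
  obtain ⟨K', hK', hdomK'⟩ := joint_of_isLeaf hM' hcardA
  have hM'e : M' ∈ Γ.erase A := hM'.1
  have hrelM' : CRel Γ M' A K' :=
    ⟨Finset.mem_of_mem_erase hM'e, hAΓ,
      Finset.mem_of_mem_erase (Finset.mem_of_mem_erase hK'),
      (Finset.mem_erase.1 hM'e).1, (Finset.mem_erase.1 hK').1,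
      (Finset.mem_erase.1 (Finset.mem_of_mem_erase hK')).1,
      fun H hH hHM hHA => hdomK' H (Finset.mem_erase.2 ⟨hHM, Finset.mem_erase.2 ⟨hHA, hH⟩⟩)⟩
  have hM'B : M' = B := by
    rcases rel_nbr hll h hrelM' with h' | h'
    · exact h'
    · exact absurd h' hM'C
  rw [hM'B] at hrelM'
  have hKB : K = B := by
    rcases rel_nbr hll hrelM hrelM' with h' | h'
    · exact absurd h' (Ne.symm h.2.2.2.2.2.1)
    · exact h'.symm
  rwa [hKB] at hrelM

end Cycle

/-! ### The walk around a cycle -/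

section Walk

/-- State of the walk: a pair of consecutive facets. -/
def WSt (Γ : Finset (Finset V)) := {p : Finset V × Finset V // ∃ C, CRel Γ p.2 p.1 C}

noncomputable def wstep (Γ : Finset (Finset V))
    (hstep : ∀ A B C, CRel Γ A B C → ∃ D, CRel Γ C A D) (s : WSt Γ) : WSt Γ :=
  ⟨(s.1.2, Classical.choose s.2), hstep _ _ _ (Classical.choose_spec s.2)⟩

noncomputable def wP (Γ : Finset (Finset V))
    (hstep : ∀ A B C, CRel Γ A B C → ∃ D, CRel Γ C A D) (s0 : WSt Γ) (k : ℕ) : Finset V :=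
  ((wstep Γ hstep)^[k] s0).1.1

lemma wP_succ (Γ : Finset (Finset V)) (hstep) (s0 : WSt Γ) (k : ℕ) :
    wP Γ hstep s0 (k+1) = ((wstep Γ hstep)^[k] s0).1.2 := by
  show ((wstep Γ hstep)^[k+1] s0).1.1 = _
  rw [Function.iterate_succ_apply']
  rfl

lemma wP_rel (Γ : Finset (Finset V)) (hstep) (s0 : WSt Γ) (k : ℕ) :
    CRel Γ (wP Γ hstep s0 (k+1)) (wP Γ hstep s0 k) (wP Γ hstep s0 (k+2)) := by
  have h2 := Classical.choose_spec ((wstep Γ hstep)^[k] s0).2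
  have e1 : wP Γ hstep s0 k = ((wstep Γ hstep)^[k] s0).1.1 := rfl
  have e2 : wP Γ hstep s0 (k+1) = ((wstep Γ hstep)^[k] s0).1.2 := wP_succ Γ hstep s0 k
  have e3 : wP Γ hstep s0 (k+2) = Classical.choose ((wstep Γ hstep)^[k] s0).2 := by
    show ((wstep Γ hstep)^[k+2] s0).1.1 = _
    have e4 : k + 2 = (k+1) + 1 := rfl
    rw [e4, Function.iterate_succ_apply', Function.iterate_succ_apply']
    rfl
  rw [e1, e2, e3]
  exact h2

end Walk

/-! ### Every cycle contains a triple satisfying the triple condition -/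

lemma cycle_has_tc (Γ : Finset (Finset V)) (hll : ∀ F, ¬ IsLeaf Γ F)
    (hmin : ∀ S ⊂ Γ, S.Nonempty → ∃ F, IsLeaf S F) (hne : Γ.Nonempty) :
    ∃ F G₁ G₂ : Finset V, F ∈ Γ ∧ G₁ ∈ Γ ∧ G₂ ∈ Γ ∧
      F ≠ G₁ ∧ F ≠ G₂ ∧ G₁ ≠ G₂ ∧ TripleCondition Γ F G₁ G₂ := by
  classical
  have hn3 := card_ge_three hne hll
  obtain ⟨X, hXΓ⟩ := hne
  obtain ⟨L, J, relLXJ⟩ := exists_rel hll hmin hn3 hXΓ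
  have hLΓ : L ∈ Γ := relLXJ.1
  have hJΓ : J ∈ Γ := relLXJ.2.2.1
  have hLX : L ≠ X := relLXJ.2.2.2.1
  have hJL : J ≠ L := relLXJ.2.2.2.2.1
  have hJX : J ≠ X := relLXJ.2.2.2.2.2.1
  by_cases hn4 : 4 ≤ Γ.card
  swap
  · -- the case of exactly three facets
    have hcard3 : Γ.card = 3 := by omega
    have hsub : ({L, X, J} : Finset (Finset V)) ⊆ Γ := by
      intro x hx
      rcases Finset.mem_insert.1 hx with rfl | hx
      · exact hLΓ
      rcases Finset.mem_insert.1 hx with rfl | hx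
      · exact hXΓ
      · rw [Finset.mem_singleton.1 hx]; exact hJΓ
    have hcardLXJ : ({L, X, J} : Finset (Finset V)).card = 3 := by
      rw [Finset.card_insert_of_notMem, Finset.card_insert_of_notMem, Finset.card_singleton]
      · simp [hXΓ, hJX.symm]
      · simp [hLX, hJL.symm]
    have hΓeq : Γ = {L, X, J} :=
      (Finset.eq_of_subset_of_card_le hsub (by omega)).symm
    have hu : ((X ∩ J) \ L).Nonempty := by
      rw [Finset.sdiff_nonempty]
      intro hsubXJ
      refine hll X (isLeaf_of_joint hXΓ (Finset.mem_erase.2 ⟨hLX, hLΓ⟩) ?_)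
      intro H hH
      have hHΓ : H ∈ Γ := Finset.mem_of_mem_erase hH
      have hHX : H ≠ X := (Finset.mem_erase.1 hH).1
      rw [hΓeq] at hHΓ
      rcases Finset.mem_insert.1 hHΓ with rfl | hHΓ
      · exact Finset.Subset.rfl
      rcases Finset.mem_insert.1 hHΓ with rfl | hHΓ
      · exact absurd rfl hHX
      · rw [Finset.mem_singleton.1 hHΓ]
        intro x hx
        have hxJ : x ∈ J := (Finset.mem_inter.1 hx).1
        have hxX : x ∈ X := (Finset.mem_inter.1 hx).2
        exact Finset.mem_inter.2 ⟨hsubXJ (Finset.mem_inter.2 ⟨hxX, hxJ⟩), hxX⟩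
    refine ⟨L, X, J, hLΓ, hXΓ, hJΓ, hLX, hJL.symm, hJX.symm,
      rel_not2 hll relLXJ, rel_not3 hll relLXJ,
      Finset.mem_union_right _ (Finset.mem_insert_self _ _),
      Finset.mem_union_right _ (Finset.mem_insert_of_mem (Finset.mem_singleton_self _)), ?_⟩
    exact Relation.ReflTransGen.single
      ⟨Finset.mem_union_right _ (Finset.mem_insert_self _ _),
       Finset.mem_union_right _ (Finset.mem_insert_of_mem (Finset.mem_singleton_self _)), hu⟩
  · -- at least four facets : walk around the cycle
    have hstep : ∀ A B C, CRel Γ A B C → ∃ D, CRel Γ C A D :=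
      fun A B C h => rel_step hll hmin hn3 h
    have hs0p : ∃ C, CRel Γ X L C := rel_step hll hmin hn3 (rel_rev hll hmin hn3 relLXJ)
    set s0 : WSt Γ := ⟨(L, X), hs0p⟩ with hs0
    set P : ℕ → Finset V := wP Γ hstep s0 with hPdef
    have hP0 : P 0 = L := rfl
    have hP1 : P 1 = X := by
      rw [hPdef, wP_succ]
      rfl
    have hrel : ∀ k, CRel Γ (P (k+1)) (P k) (P (k+2)) := fun k => wP_rel Γ hstep s0 k
    have hPΓ : ∀ k, P k ∈ Γ := fun k => (hrel k).2.1
    have hexrep : ∃ k, ∃ j, j < k ∧ P k = P j := by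
      obtain ⟨x, _, y, _, hxy, hPxy⟩ := Finset.exists_ne_map_eq_of_card_lt_of_maps_to
        (s := Finset.range (Γ.card + 1)) (t := Γ)
        (by rw [Finset.card_range]; omega) (fun k _ => hPΓ k)
      rcases Nat.lt_or_ge x y with h | h
      · exact ⟨y, x, h, hPxy.symm⟩
      · exact ⟨x, y, lt_of_le_of_ne h (Ne.symm hxy), hPxy⟩
    obtain ⟨j, hjm, hPm⟩ := Nat.find_spec hexrep
    have hinjlt : ∀ a b, a < b → b < Nat.find hexrep → P a ≠ P b := by
      intro a b hab hbm heq
      exact Nat.find_min hexrep hbm ⟨a, hab, heq.symm⟩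
    have hm3 : 3 ≤ Nat.find hexrep := by
      by_contra hc
      push_neg at hc
      have hcases : Nat.find hexrep = 1 ∨ Nat.find hexrep = 2 := by omega
      rcases hcases with h | h
      · rw [h] at hPm hjm
        have hj0 : j = 0 := by omega
        rw [hj0] at hPm
        exact (hrel 0).2.2.2.1 hPm
      · rw [h] at hPm hjm
        have : j = 0 ∨ j = 1 := by omega
        rcases this with rfl | rfl
        · exact (hrel 0).2.2.2.2.2.1 hPm
        · exact (hrel 0).2.2.2.2.1 hPm
    obtain ⟨K, hK⟩ : ∃ K, Nat.find hexrep = K + 3 := ⟨Nat.find hexrep - 3, by omega⟩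
    rw [hK] at hPm hjm
    have hinj : ∀ a, a ≤ K+2 → ∀ b, b ≤ K+2 → P a = P b → a = b := by
      intro a ha b hb heq
      rcases lt_trichotomy a b with h | h | h
      · exact absurd heq (hinjlt a b h (by omega))
      · exact h
      · exact absurd heq.symm (hinjlt b a h (by omega))
    have e13 : K+1+2 = K+3 := by omega
    have hrelK1 : CRel Γ (P (K+2)) (P (K+1)) (P (K+3)) := by
      have := hrel (K+1)
      rwa [e13] at this
    have hrev : CRel Γ (P (K+2)) (P (K+3)) (P (K+1)) := rel_rev hll hmin hn3 hrelK1
    have hj0 : j = 0 := by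
      by_contra hj
      obtain ⟨i, rfl⟩ : ∃ i, j = i + 1 := ⟨j - 1, by omega⟩
      have hrev' : CRel Γ (P (K+2)) (P (i+1)) (P (K+1)) := by rwa [hPm] at hrev
      rcases rel_nbr hll (hrel i) hrev' with h' | h'
      · have := hinj (K+2) le_rfl i (by omega) h'
        omega
      · by_cases hi2 : i + 2 ≤ K + 2
        · have hieq := hinj (K+2) le_rfl (i+2) hi2 h'
          have hiK : i = K := by omega
          rw [hiK] at hPm
          exact (hrelK1).2.2.2.2.2.1 hPm
        · have hieq : i + 2 = K + 3 := by omega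
          have : P (K+3) = P (K+2) := by rw [hPm]; congr 1; omega
          exact (hrelK1).2.2.2.2.1 this
    rw [hj0, hP0] at hPm
    -- hPm : P (K+3) = L
    have hrevL : CRel Γ (P (K+2)) L (P (K+1)) := by rwa [hPm] at hrev
    have hPK2 : P (K+2) = J := by
      rcases rel_nbr hll relLXJ hrevL with h' | h'
      · exfalso
        rw [← hP1] at h'
        have := hinj (K+2) le_rfl 1 (by omega) h'
        omega
      · exact h'
    have relXL2 : CRel Γ X L (P 2) := by
      have := hrel 0
      rwa [hP0, hP1] at this
    -- exclude K = 0
    have hK1 : 1 ≤ K := by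
      by_contra hK0
      have hK0' : K = 0 := by omega
      rw [hK0'] at hPK2 hPm
      -- P 2 = J and P 3 = L
      norm_num at hPK2 hPm
      -- hPK2 : P 2 = J, hPm : P 3 = L
      have relXLJ' : CRel Γ X L J := by rwa [hPK2] at relXL2
      have relJXL : CRel Γ J X L := by
        have h := hrel 1
        have e1 : (1:ℕ)+1 = 2 := rfl
        have e2 : (1:ℕ)+2 = 3 := rfl
        rw [e1, e2, hP1, hPK2, hPm] at h
        exact h
      set S3 : Finset (Finset V) := {L, X, J} with hS3
      have hS3sub : S3 ⊆ Γ := by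
        intro x hx
        rcases Finset.mem_insert.1 hx with rfl | hx
        · exact hLΓ
        rcases Finset.mem_insert.1 hx with rfl | hx
        · exact hXΓ
        · rw [Finset.mem_singleton.1 hx]; exact hJΓ
      have hcardS3 : S3.card = 3 := by
        rw [hS3, Finset.card_insert_of_notMem, Finset.card_insert_of_notMem,
          Finset.card_singleton]
        · simp [hJX.symm]
        · simp [hLX, hJL.symm]
      have hss : S3 ⊂ Γ := by
        refine Finset.ssubset_iff_subset_ne.2 ⟨hS3sub, ?_⟩
        intro h
        rw [h] at hcardS3
        omega
      obtain ⟨Fl, hFl⟩ := hmin S3 hss ⟨L, by rw [hS3]; exact Finset.mem_insert_self _ _⟩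
      obtain ⟨G, hG, hdom⟩ := joint_of_isLeaf hFl (by omega)
      have hFlS3 : Fl ∈ S3 := hFl.1
      have hGS3 : G ∈ S3 := Finset.mem_of_mem_erase hG
      have hGFl : G ≠ Fl := (Finset.mem_erase.1 hG).1
      have hmemL : L ∈ S3 := by rw [hS3]; exact Finset.mem_insert_self _ _
      have hmemX : X ∈ S3 := by rw [hS3]; exact Finset.mem_insert_of_mem (Finset.mem_insert_self _ _)
      have hmemJ : J ∈ S3 := by rw [hS3]; exact Finset.mem_insert_of_mem (Finset.mem_insert_of_mem (Finset.mem_singleton_self _))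
      have hid : ∀ y ∈ S3, y = L ∨ y = X ∨ y = J := by
        intro y hy
        rw [hS3] at hy
        rcases Finset.mem_insert.1 hy with rfl | hy
        · exact Or.inl rfl
        rcases Finset.mem_insert.1 hy with rfl | hy
        · exact Or.inr (Or.inl rfl)
        · exact Or.inr (Or.inr (Finset.mem_singleton.1 hy))
      rcases hid Fl hFlS3 with hFl' | hFl' | hFl'
      · -- apex L
        rw [hFl'] at hdom hGFl
        rcases hid G hGS3 with hG' | hG' | hG'
        · exact hGFl hG'
        · rw [hG'] at hdom
          exact rel_not3 hll relLXJ (hdom J (Finset.mem_erase.2 ⟨hJL, hmemJ⟩))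
        · rw [hG'] at hdom
          exact rel_not2 hll relLXJ (hdom X (Finset.mem_erase.2 ⟨Ne.symm hLX, hmemX⟩))
      · -- apex X
        rw [hFl'] at hdom hGFl
        rcases hid G hGS3 with hG' | hG' | hG'
        · rw [hG'] at hdom
          exact rel_not3 hll relXLJ' (hdom J (Finset.mem_erase.2 ⟨hJX, hmemJ⟩))
        · exact hGFl hG'
        · rw [hG'] at hdom
          exact rel_not2 hll relXLJ' (hdom L (Finset.mem_erase.2 ⟨hLX, hmemL⟩))
      · -- apex J
        rw [hFl'] at hdom hGFl
        rcases hid G hGS3 with hG' | hG' | hG'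
        · rw [hG'] at hdom
          exact rel_not2 hll relJXL (hdom X (Finset.mem_erase.2 ⟨Ne.symm hJX, hmemX⟩))
        · rw [hG'] at hdom
          exact rel_not3 hll relJXL (hdom L (Finset.mem_erase.2 ⟨Ne.symm hJL, hmemL⟩))
        · exact hGFl hG'
    -- main case : K ≥ 1
    have relrev0 : CRel Γ X (P 2) L := rel_rev hll hmin hn3 relXL2
    have relLJX : CRel Γ L J X := rel_rev hll hmin hn3 relLXJ
    have hJne : ∀ i, i ≤ K+1 → J ≠ P i := by
      intro i hi h
      rw [← hPK2] at h
      have := hinj (K+2) le_rfl i (by omega) h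
      omega
    have hLne : ∀ i, 1 ≤ i → i ≤ K+2 → L ≠ P i := by
      intro i h1 h2 h
      rw [← hP0] at h
      have := hinj 0 (by omega) i (by omega) h
      omega
    -- X ∩ J ⊆ L
    have hXJL : X ∩ J ⊆ L := by
      have hd := relrev0.2.2.2.2.2.2 J hJΓ hJX (hJne 2 (by omega))
      intro x hx
      have hx' : x ∈ J ∩ X := by rw [Finset.inter_comm]; exact hx
      exact (Finset.mem_inter.1 (hd hx')).1
    -- X ∩ J ⊆ P (i+1) for i ≤ K
    have hE : ∀ i, i ≤ K → X ∩ J ⊆ P (i+1) := by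
      intro i
      induction i with
      | zero =>
        intro _
        rw [hP1]
        exact Finset.inter_subset_left
      | succ i ih =>
        intro hi
        have ih' := ih (by omega)
        have hd := (hrel i).2.2.2.2.2.2 J hJΓ (hJne (i+1) (by omega)) (hJne i (by omega))
        intro x hx
        have hxJ : x ∈ J := (Finset.mem_inter.1 hx).2
        have hxP : x ∈ P (i+1) := ih' hx
        exact (Finset.mem_inter.1 (hd (Finset.mem_inter.2 ⟨hxJ, hxP⟩))).1
    -- interior facets have the right intersection with L
    have hintres : ∀ k, 2 ≤ k → k ≤ K+1 → P k ∩ L = X ∩ J := by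
      intro k h2 hk
      have hne1 : P k ≠ X := by
        rw [← hP1]
        intro h
        have := hinj k (by omega) 1 (by omega) h
        omega
      have hneJ : P k ≠ J := fun h => hJne k (by omega) h.symm
      have hne0 : P k ≠ L := fun h => hLne k (by omega) (by omega) h.symm
      apply Finset.Subset.antisymm
      · intro x hx
        have d1 := relLXJ.2.2.2.2.2.2 (P k) (hPΓ k) hne0 hne1
        have d2 := relLJX.2.2.2.2.2.2 (P k) (hPΓ k) hne0 hneJ
        exact Finset.mem_inter.2 ⟨(Finset.mem_inter.1 (d2 hx)).1, (Finset.mem_inter.1 (d1 hx)).1⟩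
      · intro x hx
        obtain ⟨i, rfl⟩ : ∃ i, k = i + 1 := ⟨k - 1, by omega⟩
        exact Finset.mem_inter.2 ⟨hE i (by omega) hx, hXJL hx⟩
    have hmemres : ∀ k, 1 ≤ k → k ≤ K+2 → P k ∈ residue Γ L X J := by
      intro k h1 h2
      by_cases hk1 : k = 1
      · rw [hk1, hP1]
        exact Finset.mem_union_right _ (Finset.mem_insert_self _ _)
      by_cases hk2 : k = K+2
      · rw [hk2, hPK2]
        exact Finset.mem_union_right _ (Finset.mem_insert_of_mem (Finset.mem_singleton_self _))
      · exact Finset.mem_union_left _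
          (Finset.mem_filter.2 ⟨hPΓ k, hintres k (by omega) (by omega)⟩)
    have hedge : ∀ k, 1 ≤ k → k ≤ K+1 → ((P k ∩ P (k+1)) \ L).Nonempty := by
      intro k h1 h2
      by_cases hk1 : k = 1
      · obtain ⟨u, hu1, hu2⟩ := Finset.not_subset.1 (rel_not3 hll relXL2)
        have huX : u ∈ X := (Finset.mem_inter.1 hu1).2
        have huP2 : u ∈ P 2 := (Finset.mem_inter.1 hu1).1
        have huL : u ∉ L := fun h => hu2 (Finset.mem_inter.2 ⟨h, huX⟩)
        rw [hk1]
        refine ⟨u, Finset.mem_sdiff.2 ⟨?_, huL⟩⟩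
        rw [hP1]
        exact Finset.mem_inter.2 ⟨huX, huP2⟩
      by_cases hk2 : k = K+1
      · have hr : CRel Γ (P (K+2)) (P (K+1)) L := by
          have := hrelK1
          rwa [hPm] at this
        obtain ⟨u, hu1, hu2⟩ := Finset.not_subset.1 (rel_not2 hll hr)
        have huP2 : u ∈ P (K+2) := (Finset.mem_inter.1 hu1).2
        have huP1 : u ∈ P (K+1) := (Finset.mem_inter.1 hu1).1
        have huL : u ∉ L := fun h => hu2 (Finset.mem_inter.2 ⟨h, huP2⟩)
        rw [hk2]
        exact ⟨u, Finset.mem_sdiff.2 ⟨Finset.mem_inter.2 ⟨huP1, huP2⟩, huL⟩⟩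
      · obtain ⟨i, rfl⟩ : ∃ i, k = i + 1 := ⟨k - 1, by omega⟩
        have hr := hrel i
        obtain ⟨u, hu1, hu2⟩ := Finset.not_subset.1 (rel_not3 hll hr)
        have huP1 : u ∈ P (i+1) := (Finset.mem_inter.1 hu1).2
        have huP2 : u ∈ P (i+2) := (Finset.mem_inter.1 hu1).1
        have huPi : u ∉ P i := fun h => hu2 (Finset.mem_inter.2 ⟨h, huP1⟩)
        have huL : u ∉ L := by
          intro huL
          have hrrev := rel_rev hll hmin hn3 hr
          have hd := hrrev.2.2.2.2.2.2 L hLΓ (hLne (i+1) (by omega) (by omega))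
            (hLne (i+2) (by omega) (by omega))
          exact huPi (Finset.mem_inter.1 (hd (Finset.mem_inter.2 ⟨huL, huP1⟩))).1
        exact ⟨u, Finset.mem_sdiff.2 ⟨Finset.mem_inter.2 ⟨huP1, huP2⟩, huL⟩⟩
    have hchain : ∀ i, i ≤ K+1 → Relation.ReflTransGen
        (fun A B => A ∈ residue Γ L X J ∧ B ∈ residue Γ L X J ∧ ((A ∩ B) \ L).Nonempty)
        (P 1) (P (i+1)) := by
      intro i
      induction i with
      | zero => intro _; exact Relation.ReflTransGen.refl
      | succ i ih =>
        intro hi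
        exact (ih (by omega)).tail ⟨hmemres (i+1) (by omega) (by omega),
          hmemres (i+2) (by omega) (by omega), hedge (i+1) (by omega) (by omega)⟩
    refine ⟨L, X, J, hLΓ, hXΓ, hJΓ, hLX, hJL.symm, hJX.symm,
      rel_not2 hll relLXJ, rel_not3 hll relLXJ,
      Finset.mem_union_right _ (Finset.mem_insert_self _ _),
      Finset.mem_union_right _ (Finset.mem_insert_of_mem (Finset.mem_singleton_self _)), ?_⟩
    have := hchain (K+1) le_rfl
    rwa [hP1, show K+1+1 = K+2 from rfl, hPK2] at this


/-! ### Monotonicity of the triple condition -/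

lemma tc_mono {Γ Δ : Finset (Finset V)} (h : Γ ⊆ Δ) {F G₁ G₂ : Finset V}
    (htc : TripleCondition Γ F G₁ G₂) : TripleCondition Δ F G₁ G₂ := by
  obtain ⟨h1, h2, hm1, hm2, hch⟩ := htc
  have hres : residue Γ F G₁ G₂ ⊆ residue Δ F G₁ G₂ :=
    Finset.union_subset_union (Finset.filter_subset_filter _ h) Finset.Subset.rfl
  exact ⟨h1, h2, hres hm1, hres hm2,
    Relation.ReflTransGen.mono (fun A B hAB => ⟨hres hAB.1, hres hAB.2.1, hAB.2.2⟩) _ _ hch⟩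

theorem tree_iff_no_triple_condition (Δ : Finset (Finset V))
    (hΔ : IsFacetComplex Δ) (hconn : FCConnected Δ) :
    IsTree Δ ↔
      ¬ ∃ F G₁ G₂ : Finset V, F ∈ Δ ∧ G₁ ∈ Δ ∧ G₂ ∈ Δ ∧
        F ≠ G₁ ∧ F ≠ G₂ ∧ G₁ ≠ G₂ ∧ TripleCondition Δ F G₁ G₂ := by
  constructor
  · intro htree
    exact forest_no_tc Δ hΔ htree.2
  · intro hno
    refine ⟨hconn, ?_⟩
    intro Γ'
    induction Γ' using Finset.strongInduction with
    | _ S IH =>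
      intro hS hSne
      by_contra hnl
      push_neg at hnl
      have hll : ∀ F, ¬ IsLeaf S F := fun F h => hnl F h
      have hminS : ∀ T ⊂ S, T.Nonempty → ∃ F, IsLeaf T F :=
        fun T hT hTne => IH T hT (hT.subset.trans hS) hTne
      obtain ⟨F, G₁, G₂, m1, m2, m3, d1, d2, d3, tc⟩ := cycle_has_tc S hll hminS hSne
      exact hno ⟨F, G₁, G₂, hS m1, hS m2, hS m3, d1, d2, d3, tc_mono hS tc⟩
end

section
/- A facet F of a facet complex Δ is a reducible leaf if and only if F is a leaf of every subset Δ' ⊆ Δ containing F. -/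
variable {V : Type*} [DecidableEq V]

/-- `F` is a reducible leaf of `Δ`. -/
def ReducibleLeaf (Δ : Finset (Finset V)) (F : Finset V) : Prop :=
  F ∈ Δ ∧ ∀ G ∈ Δ, ∀ G' ∈ Δ, G ∩ F ⊆ G' ∩ F ∨ G' ∩ F ⊆ G ∩ F

theorem ReducibleLeaf.mono {Δ Γ : Finset (Finset V)} {F : Finset V} (h : ReducibleLeaf Δ F)
    (hΓ : Γ ⊆ Δ) (hF : F ∈ Γ) : ReducibleLeaf Γ F :=
  ⟨hF, fun G hG G' hG' => h.2 G (hΓ hG) G' (hΓ hG')⟩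

theorem ReducibleLeaf.isLeaf {Δ : Finset (Finset V)} {F : Finset V} (h : ReducibleLeaf Δ F) :
    IsLeaf Δ F := by
  refine ⟨h.1, ?_⟩
  rcases (Δ.erase F).eq_empty_or_nonempty with hempty | hne
  · exact Or.inl (((Finset.erase_eq_empty_iff _ _).mp hempty).resolve_left
      (Finset.ne_empty_of_mem h.1))
  · -- a facet maximising `#(G ∩ F)` dominates all others, since `≤_F` is total
    obtain ⟨G, hG, hGmax⟩ := (Δ.erase F).exists_max_image (fun H => (H ∩ F).card) hne
    refine Or.inr ⟨G, hG, fun H hH => ?_⟩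
    rcases h.2 H (Finset.mem_of_mem_erase hH) G (Finset.mem_of_mem_erase hG) with hle | hge
    · exact hle
    · exact (Finset.eq_of_subset_of_card_le hge (hGmax H hH)).ge

theorem inter_subset_or_subset_of_isLeaf_triple {F G G' : Finset V} (h : IsLeaf {F, G, G'} F) :
    G ∩ F ⊆ G' ∩ F ∨ G' ∩ F ⊆ G ∩ F := by
  by_cases hGF : G = F
  · subst hGF
    exact Or.inr (by rw [Finset.inter_self]; exact Finset.inter_subset_right)
  by_cases hG'F : G' = F
  · subst hG'F
    exact Or.inl (by rw [Finset.inter_self]; exact Finset.inter_subset_right)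
  have hpair : ({F, G, G'} : Finset (Finset V)).erase F = {G, G'} := by
    rw [Finset.erase_insert_eq_erase, Finset.erase_insert_of_ne hGF,
      Finset.erase_eq_of_notMem (by simpa [eq_comm] using hG'F)]
  obtain ⟨K, hK, hKmax⟩ := h.2.resolve_left fun hsingle =>
    hGF (Finset.mem_singleton.mp (hsingle ▸ by simp))
  rw [hpair] at hK hKmax
  rcases Finset.mem_insert.mp hK with rfl | hK
  · exact Or.inr (hKmax G' (by simp))
  · obtain rfl := Finset.mem_singleton.mp hK
    exact Or.inl (hKmax G (by simp))

theorem reducible_leaf_iff_leaf_of_every_subset_general (Δ : Finset (Finset V))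
    (F : Finset V) (hF : F ∈ Δ) :
    ReducibleLeaf Δ F ↔ ∀ Γ ⊆ Δ, F ∈ Γ → IsLeaf Γ F := by
  refine ⟨fun h Γ hΓ hFΓ => (h.mono hΓ hFΓ).isLeaf, fun h => ⟨hF, fun G hG G' hG' => ?_⟩⟩
  refine inter_subset_or_subset_of_isLeaf_triple (h _ ?_ (Finset.mem_insert_self _ _))
  simp [Finset.insert_subset_iff, hF, hG, hG']

theorem reducible_leaf_iff_leaf_of_every_subset (Δ : Finset (Finset V))
    (hΔ : IsFacetComplex Δ) (F : Finset V) (hF : F ∈ Δ) :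
    ReducibleLeaf Δ F ↔ ∀ Γ ⊆ Δ, F ∈ Γ → IsLeaf Γ F :=
  reducible_leaf_iff_leaf_of_every_subset_general Δ F hF
end

section
/- A reducible leaf of a facet complex Δ cannot belong to any cycle contained in Δ. -/
variable {V : Type*} [DecidableEq V]

theorem ReducibleLeaf.subset {Δ Γ : Finset (Finset V)} {F : Finset V} (h : ReducibleLeaf Δ F)
    (hΓΔ : Γ ⊆ Δ) (hF : F ∈ Γ) : ReducibleLeaf Γ F :=
  ⟨hF, fun G hG G' hG' => h.2 G (hΓΔ hG) G' (hΓΔ hG')⟩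

theorem reducible_leaf_not_in_cycle_general (Δ : Finset (Finset V))
    (F : Finset V) (hred : ReducibleLeaf Δ F) :
    ∀ Γ ⊆ Δ, IsCycle Γ → F ∉ Γ :=
  fun _ hΓΔ hcyc hF => hcyc.2.1 ⟨F, (hred.subset hΓΔ hF).isLeaf⟩

theorem reducible_leaf_not_in_cycle (Δ : Finset (Finset V))
    (hΔ : IsFacetComplex Δ) (F : Finset V) (hred : ReducibleLeaf Δ F) :
    ∀ Γ ⊆ Δ, IsCycle Γ → F ∉ Γ :=
  reducible_leaf_not_in_cycle_general Δ F hred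
end

section
/- Let Δ be a facet complex in which each facet has cardinality 2 (i.e., Δ is a graph). Then Δ is a cycle in the simplicial sense if and only if its facets form a graph cycle: they can be enumerated as edges {v₁,v₂}, {v₂,v₃}, …, {vₙ,v₁} for distinct vertices v₁, …, vₙ with n ≥ 3. -/
open Finset
open Fin.CommRing Fin.NatCast


variable {V : Type*} [DecidableEq V]

section helpers
variable {n : ℕ} {v : Fin (n+3) → V} (hv : Function.Injective v)

lemma ne_succ (i : Fin (n+3)) : i ≠ i + 1 := by
  simp [Fin.ext_iff, Fin.val_add]

include hv

lemma mem_edge {j i : Fin (n+3)} :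
    v j ∈ ({v i, v (i+1)} : Finset V) ↔ j = i ∨ j = i + 1 := by
  simp [hv.eq_iff]

lemma edge_card (i : Fin (n+3)) : ({v i, v (i+1)} : Finset V).card = 2 :=
  Finset.card_pair (hv.ne (ne_succ i))

lemma edge_inj :
    Function.Injective (fun i : Fin (n+3) => ({v i, v (i+1)} : Finset V)) := by
  intro i j h
  simp only at h
  have h1 : v i ∈ ({v j, v (j+1)} : Finset V) := h ▸ (by simp)
  have h2 : v (i+1) ∈ ({v j, v (j+1)} : Finset V) := h ▸ (by simp)
  rw [mem_edge hv] at h1 h2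
  rcases h1 with h1 | h1
  · exact h1
  · rcases h2 with h2 | h2
    · exfalso
      have : i = i + 2 := by
        calc i = j + 1 := h1
        _ = (i + 1) + 1 := by rw [← h2]
        _ = i + 2 := by ring
      simp [Fin.ext_iff, Fin.val_add, Fin.val_two] at this
      rw [Nat.mod_eq_of_lt (by omega)] at this
      omega
    · exact add_right_cancel h2
end helpers

section main
variable {n : ℕ} {v : Fin (n+3) → V} (hv : Function.Injective v)

include hv

lemma cycle_noLeaf :
    ¬ ∃ F, IsLeaf (Finset.image (fun i : Fin (n+3) => ({v i, v (i+1)} : Finset V)) Finset.univ) F := by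
  rintro ⟨F, hF, hcase⟩
  simp only [Finset.mem_image, Finset.mem_univ, true_and] at hF
  obtain ⟨i, rfl⟩ := hF
  set e : Fin (n+3) → Finset V := fun i => ({v i, v (i+1)} : Finset V) with he
  have hmem : ∀ j, e j ∈ Finset.image e Finset.univ := fun j => Finset.mem_image_of_mem _ (Finset.mem_univ j)
  have hne1 : e (i+1) ≠ e i := fun h => ne_succ i ((edge_inj hv h).symm)
  have hne2 : e (i-1) ≠ e i := by
    intro h
    have h2 : (1 : Fin (n+3)) = 0 := sub_eq_self.mp (edge_inj hv h)
    simp [Fin.ext_iff] at h2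
  rcases hcase with h | ⟨G, hG, hall⟩
  · exact hne1 (by have := hmem (i+1); rw [h] at this; simpa using this)
  · have hGi : v i ∈ G := by
      have h2 : e (i-1) ∈ (Finset.image e Finset.univ).erase (e i) :=
        Finset.mem_erase.2 ⟨hne2, hmem _⟩
      have := hall _ h2
      have hvi : v i ∈ e (i-1) ∩ e i := by
        simp only [Finset.mem_inter]
        constructor
        · have : (i - 1) + 1 = i := by ring
          simp [he, this]
        · simp [he]
      exact (Finset.mem_inter.1 (this hvi)).1
    have hGi1 : v (i+1) ∈ G := by
      have h1 : e (i+1) ∈ (Finset.image e Finset.univ).erase (e i) :=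
        Finset.mem_erase.2 ⟨hne1, hmem _⟩
      have := hall _ h1
      have hvi : v (i+1) ∈ e (i+1) ∩ e i := by
        simp only [Finset.mem_inter]
        exact ⟨by simp [he], by simp [he]⟩
      exact (Finset.mem_inter.1 (this hvi)).1
    have hsub : e i ⊆ G := by
      intro x hx
      rcases Finset.mem_insert.1 hx with rfl | hx
      · exact hGi
      · rw [Finset.mem_singleton] at hx; subst hx; exact hGi1
    have hGmem := Finset.mem_of_mem_erase hG
    simp only [Finset.mem_image, Finset.mem_univ, true_and] at hGmem
    obtain ⟨j, rfl⟩ := hGmem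
    have : e i = e j := Finset.eq_of_subset_of_card_le hsub (by rw [edge_card hv, edge_card hv])
    exact (Finset.ne_of_mem_erase hG) this.symm

lemma cycle_properLeaf :
    ∀ Γ ⊂ Finset.image (fun i : Fin (n+3) => ({v i, v (i+1)} : Finset V)) Finset.univ,
      Γ.Nonempty → ∃ F, IsLeaf Γ F := by
  intro Γ hΓ hne
  set e : Fin (n+3) → Finset V := fun i => ({v i, v (i+1)} : Finset V) with he
  have hsub : Γ ⊆ Finset.image e Finset.univ := hΓ.subset
  have hrep : ∀ B ∈ Γ, ∃ j, e j = B := by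
    intro B hB
    have := hsub hB
    simp only [Finset.mem_image, Finset.mem_univ, true_and] at this
    exact this
  obtain ⟨B, hB⟩ := hne
  obtain ⟨a, ha⟩ := hrep B hB
  have haΓ : e a ∈ Γ := ha ▸ hB
  obtain ⟨X, hX, hXn⟩ := Finset.exists_of_ssubset hΓ
  simp only [Finset.mem_image, Finset.mem_univ, true_and] at hX
  obtain ⟨b, rfl⟩ := hX
  -- find i with e i ∈ Γ, e (i+1) ∉ Γ
  have hP : ∃ t : ℕ, e (a + (t : Fin (n+3))) ∉ Γ := by
    refine ⟨(b - a).val, ?_⟩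
    rw [Fin.cast_val_eq_self]
    have : a + (b - a) = b := by ring
    rw [this]; exact hXn
  classical
  set t₀ := Nat.find hP with ht₀
  have ht₀pos : t₀ ≠ 0 := by
    intro h
    have := Nat.find_spec hP
    rw [← ht₀, h] at this
    simp at this
    exact this haΓ
  obtain ⟨s, hs⟩ : ∃ s, t₀ = s + 1 := ⟨t₀ - 1, by omega⟩
  set i : Fin (n+3) := a + (s : Fin (n+3)) with hi
  have hiΓ : e i ∈ Γ := by
    have := Nat.find_min hP (m := s) (by omega)
    simpa using this
  have hi1Γ : e (i+1) ∉ Γ := by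
    have := Nat.find_spec hP
    rw [← ht₀, hs] at this
    have hcast : ((s + 1 : ℕ) : Fin (n+3)) = (s : Fin (n+3)) + 1 := by push_cast; ring
    rw [hcast, ← add_assoc] at this
    exact this
  refine ⟨e i, hiΓ, ?_⟩
  have hnotin : ∀ H ∈ Γ.erase (e i), v (i+1) ∉ H := by
    intro H hH hmem
    obtain ⟨j, rfl⟩ := hrep H (Finset.mem_of_mem_erase hH)
    rw [mem_edge hv] at hmem
    rcases hmem with h | h
    · exact hi1Γ (h ▸ Finset.mem_of_mem_erase hH)
    · exact Finset.ne_of_mem_erase hH (by rw [add_right_cancel h])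
  by_cases hx : ∃ H₀ ∈ Γ.erase (e i), v i ∈ H₀
  · obtain ⟨H₀, hH₀, hvH₀⟩ := hx
    right
    refine ⟨H₀, hH₀, fun H hH x hxm => ?_⟩
    rw [Finset.mem_inter] at hxm
    obtain ⟨hxH, hxF⟩ := hxm
    rcases Finset.mem_insert.1 hxF with rfl | hxF
    · exact Finset.mem_inter.2 ⟨hvH₀, by simp [he]⟩
    · rw [Finset.mem_singleton] at hxF; subst hxF
      exact absurd hxH (hnotin H hH)
  · rcases Finset.eq_empty_or_nonempty (Γ.erase (e i)) with hemp | ⟨G, hG⟩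
    · left
      apply Finset.eq_singleton_iff_unique_mem.2
      refine ⟨hiΓ, fun B hB => ?_⟩
      by_contra hBne
      exact Finset.notMem_empty B (hemp ▸ Finset.mem_erase.2 ⟨hBne, hB⟩)
    · right
      refine ⟨G, hG, fun H hH x hxm => ?_⟩
      rw [Finset.mem_inter] at hxm
      obtain ⟨hxH, hxF⟩ := hxm
      rcases Finset.mem_insert.1 hxF with rfl | hxF
      · exact absurd ⟨H, hH, hxH⟩ hx
      · rw [Finset.mem_singleton] at hxF; subst hxF
        exact absurd hxH (hnotin H hH)
end main

section forward
variable {Δ : Finset (Finset V)}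

lemma step_lemma (hgraph : ∀ F ∈ Δ, F.card = 2) (hnl : ¬ ∃ F, IsLeaf Δ F)
    {a b : V} (hab : a ≠ b) (hmem : ({a, b} : Finset V) ∈ Δ) :
    ∃ c, c ≠ b ∧ c ≠ a ∧ ({b, c} : Finset V) ∈ Δ := by
  classical
  set F : Finset V := {a, b} with hF
  have hex : ∃ H ∈ Δ.erase F, b ∈ H := by
    by_contra hno
    push_neg at hno
    apply hnl
    refine ⟨F, hmem, ?_⟩
    rcases Finset.eq_empty_or_nonempty (Δ.erase F) with hemp | ⟨G0, hG0⟩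
    · left
      apply Finset.eq_singleton_iff_unique_mem.2
      refine ⟨hmem, fun B hB => ?_⟩
      by_contra hBne
      exact Finset.notMem_empty B (hemp ▸ Finset.mem_erase.2 ⟨hBne, hB⟩)
    · by_cases hxa : ∃ H₀ ∈ Δ.erase F, a ∈ H₀
      · obtain ⟨H₀, hH₀, ha0⟩ := hxa
        right
        refine ⟨H₀, hH₀, fun H hH x hx => ?_⟩
        rw [Finset.mem_inter] at hx
        obtain ⟨hxH, hxF⟩ := hx
        rcases Finset.mem_insert.1 hxF with rfl | hxF
        · exact Finset.mem_inter.2 ⟨ha0, by simp [hF]⟩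
        · rw [Finset.mem_singleton] at hxF; subst hxF
          exact absurd hxH (hno H hH)
      · right
        refine ⟨G0, hG0, fun H hH x hx => ?_⟩
        rw [Finset.mem_inter] at hx
        obtain ⟨hxH, hxF⟩ := hx
        rcases Finset.mem_insert.1 hxF with rfl | hxF
        · exact absurd ⟨H, hH, hxH⟩ hxa
        · rw [Finset.mem_singleton] at hxF; subst hxF
          exact absurd hxH (hno H hH)
  obtain ⟨H, hH, hbH⟩ := hex
  obtain ⟨x, y, hxy, hHxy⟩ := Finset.card_eq_two.1 (hgraph H (Finset.mem_of_mem_erase hH))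
  have hbx : b = x ∨ b = y := by
    rw [hHxy] at hbH; simpa using hbH
  obtain ⟨c, hcb, hHc⟩ : ∃ c, c ≠ b ∧ H = {b, c} := by
    rcases hbx with rfl | rfl
    · exact ⟨y, fun h => hxy h.symm, hHxy⟩
    · exact ⟨x, fun h => hxy h, by rw [hHxy, Finset.pair_comm]⟩
  refine ⟨c, hcb, ?_, hHc ▸ Finset.mem_of_mem_erase hH⟩
  rintro rfl
  exact Finset.ne_of_mem_erase hH (by rw [hHc, hF, Finset.pair_comm])

lemma exists_walk (hgraph : ∀ F ∈ Δ, F.card = 2) (hnl : ¬ ∃ F, IsLeaf Δ F)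
    (hne : Δ.Nonempty) :
    ∃ w : ℕ → V, (∀ k, ({w k, w (k+1)} : Finset V) ∈ Δ) ∧
      (∀ k, w k ≠ w (k+1)) ∧ (∀ k, w k ≠ w (k+2)) := by
  classical
  obtain ⟨F₀, hF₀⟩ := hne
  obtain ⟨a₀, b₀, hab₀, rfl⟩ := Finset.card_eq_two.1 (hgraph F₀ hF₀)
  set Good : V × V → Prop := fun p => p.1 ≠ p.2 ∧ ({p.1, p.2} : Finset V) ∈ Δ with hGood
  have hstep : ∀ p : V × V, Good p → ∃ q : V × V, Good q ∧ q.1 = p.2 ∧ q.2 ≠ p.1 := by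
    rintro ⟨a, b⟩ ⟨h1, h2⟩
    obtain ⟨c, hcb, hca, hc⟩ := step_lemma hgraph hnl h1 h2
    exact ⟨(b, c), ⟨fun h => hcb h.symm, hc⟩, rfl, hca⟩
  set g : {p : V × V // Good p} → {p : V × V // Good p} :=
    fun s => ⟨(hstep s.1 s.2).choose, (hstep s.1 s.2).choose_spec.1⟩ with hg
  have hg1 : ∀ s, (g s).1.1 = s.1.2 := fun s => (hstep s.1 s.2).choose_spec.2.1
  have hg2 : ∀ s, (g s).1.2 ≠ s.1.1 := fun s => (hstep s.1 s.2).choose_spec.2.2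
  set s₀ : {p : V × V // Good p} := ⟨(a₀, b₀), hab₀, hF₀⟩ with hs₀
  set seq : ℕ → {p : V × V // Good p} := fun k => g^[k] s₀ with hseq
  have hsucc : ∀ k, seq (k+1) = g (seq k) := fun k => Function.iterate_succ_apply' g k s₀
  set w : ℕ → V := fun k => (seq k).1.1 with hw
  have hchain : ∀ k, w (k+1) = (seq k).1.2 := by
    intro k; rw [hw]; simp only; rw [hsucc k]; exact hg1 _
  refine ⟨w, ?_, ?_, ?_⟩
  · intro k; rw [hchain]; exact (seq k).2.2
  · intro k; rw [hchain]; exact (seq k).2.1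
  · intro k
    have : w (k+2) = (seq (k+1)).1.2 := hchain (k+1)
    rw [this, hsucc k]
    exact fun h => hg2 (seq k) h.symm
end forward

theorem graph_cycle_iff (Δ : Finset (Finset V)) (hΔ : IsFacetComplex Δ)
    (hgraph : ∀ F ∈ Δ, F.card = 2) :
    IsCycle Δ ↔
      ∃ n : ℕ, 3 ≤ n + 3 ∧ ∃ v : Fin (n + 3) → V, Function.Injective v ∧
        Δ = Finset.image (fun i : Fin (n + 3) => ({v i, v (i + 1)} : Finset V))
          Finset.univ := by
  classical
  constructor
  · rintro ⟨hne, hnl, hprop⟩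
    obtain ⟨w, hw1, hw2, hw3⟩ := exists_walk hgraph hnl hne
    -- pigeonhole: some value repeats
    have hrep : ∃ k l : ℕ, k < l ∧ w k = w l := by
      set T : Finset V := Δ.biUnion id with hT
      have hmaps : ∀ k ∈ Finset.range (T.card + 1), w k ∈ T := by
        intro k _
        exact Finset.mem_biUnion.2 ⟨{w k, w (k+1)}, hw1 k, by simp⟩
      obtain ⟨x, hx, y, hy, hxy, hwxy⟩ :=
        Finset.exists_ne_map_eq_of_card_lt_of_maps_to
          (by simp) hmaps
      rcases lt_or_gt_of_ne hxy with h | h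
      · exact ⟨x, y, h, hwxy⟩
      · exact ⟨y, x, h, hwxy.symm⟩
    have hPex : ∃ l : ℕ, ∃ k, k < l ∧ w k = w l := by
      obtain ⟨k, l, hkl, hw⟩ := hrep; exact ⟨l, k, hkl, hw⟩
    set l₀ := Nat.find hPex with hl₀
    obtain ⟨k, hkl, hwk⟩ := Nat.find_spec hPex
    have hinj : ∀ i j : ℕ, i < j → j < l₀ → w i ≠ w j :=
      fun i j hij hjl h => Nat.find_min hPex hjl ⟨i, hij, h⟩
    have hk3 : k + 3 ≤ l₀ := by
      by_contra hcon
      have : l₀ = k + 1 ∨ l₀ = k + 2 := by omega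
      rcases this with h | h
      · exact hw2 k (h ▸ hwk)
      · exact hw3 k (h ▸ hwk)
    set n : ℕ := l₀ - k - 3 with hn
    have hml : k + (n + 3) = l₀ := by omega
    set v : Fin (n+3) → V := fun i => w (k + i.val) with hvdef
    have hv : Function.Injective v := by
      intro i j h
      have key : ∀ i j : Fin (n+3), (i : ℕ) < (j : ℕ) → v i ≠ v j := by
        intro i j hij
        exact hinj (k + i.val) (k + j.val) (by omega) (by omega)
      rcases lt_trichotomy (i : ℕ) (j : ℕ) with hlt | heq | hgt
      · exact absurd h (key i j hlt)
      · exact Fin.ext heq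
      · exact absurd h.symm (key j i hgt)
    have hvsucc : ∀ i : Fin (n+3), v (i + 1) = w (k + i.val + 1) := by
      intro i
      have hval : ((i + 1 : Fin (n+3)) : ℕ) = ((i : ℕ) + 1) % (n + 3) := by
        simp [Fin.val_add]
      by_cases hlt : (i : ℕ) + 1 < n + 3
      · rw [hvdef]; simp only
        rw [hval, Nat.mod_eq_of_lt hlt, add_assoc]
      · have hieq : (i : ℕ) + 1 = n + 3 := by omega
        rw [hvdef]; simp only
        rw [hval, hieq, Nat.mod_self, add_zero, hwk]
        congr 1
        omega
    have hedges : ∀ i : Fin (n+3), ({v i, v (i + 1)} : Finset V) ∈ Δ := by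
      intro i
      rw [hvsucc i]
      exact hw1 (k + i.val)
    set C : Finset (Finset V) :=
      Finset.image (fun i : Fin (n+3) => ({v i, v (i + 1)} : Finset V)) Finset.univ with hC
    have hCsub : C ⊆ Δ := by
      intro B hB
      simp only [hC, Finset.mem_image, Finset.mem_univ, true_and] at hB
      obtain ⟨i, rfl⟩ := hB
      exact hedges i
    have hCeq : C = Δ := by
      by_contra h
      have hss : C ⊂ Δ := HasSubset.Subset.ssubset_of_ne hCsub h
      have hCne : C.Nonempty :=
        ⟨_, Finset.mem_image_of_mem _ (Finset.mem_univ (0 : Fin (n+3)))⟩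
      exact cycle_noLeaf hv (hprop C hss hCne)
    exact ⟨n, by omega, v, hv, hCeq.symm⟩
  · rintro ⟨n, -, v, hv, rfl⟩
    exact ⟨⟨_, Finset.mem_image_of_mem _ (Finset.mem_univ (0 : Fin (n+3)))⟩,
      cycle_noLeaf hv, cycle_properLeaf hv⟩
end
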